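/- arXiv:2212.02169 — 9 statements merged into one kernel-verified Lean document; each statement's English description precedes it below -/
import Mathlib

section
/- Suppose κ is a limit cardinal. Then there exists a connected graph whose vertex set has cardinality κ, whose chromatic number is κ, but such that the complete graph K_κ is not a minor of this graph. -/
universe u

open Cardinal

def Colorable' {V : Type u} (G : SimpleGraph V) (μ : Cardinal.{u}) : Prop :=
  ∃ (β : Type u) (c : V → β), #β ≤ μ ∧ ∀ ⦃x y : V⦄, G.Adj x y → c x ≠ c y

def ChromaticEq {V : Type u} (G : SimpleGraph V) (μ : Cardinal.{u}) : Prop :=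
  Colorable' G μ ∧ ∀ ν : Cardinal.{u}, ν < μ → ¬ Colorable' G ν

def HasCompleteMinor {V : Type u} (G : SimpleGraph V) (κ : Cardinal.{u}) : Prop :=
  ∃ (ι : Type u) (U : ι → Set V), #ι = κ ∧
    (∀ i, (U i).Nonempty) ∧
    (∀ i j, i ≠ j → Disjoint (U i) (U j)) ∧
    (∀ i, (G.induce (U i)).Connected) ∧
    (∀ i j, i ≠ j → ∃ x ∈ U i, ∃ y ∈ U j, G.Adj x y)

def IsSetTree (T : Type u) [PartialOrder T] : Prop :=
  ∀ t : T, IsWellOrder {s : T // s < t} (· < ·)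

def compGraph (T : Type u) [PartialOrder T] : SimpleGraph T :=
  SimpleGraph.fromRel (· ≤ ·)

def IsSpecialTree (T : Type u) [PartialOrder T] (κ : Cardinal.{u}) : Prop :=
  ∃ (β : Type u) (f : T → β), #β ≤ κ ∧ ∀ ⦃s t : T⦄, s < t → f s ≠ f t

def HasChainOfSize (T : Type u) [PartialOrder T] (κ : Cardinal.{u}) : Prop :=
  ∃ C : Set T, IsChain (· ≤ ·) C ∧ #C = κ

def HasAntichainOfSize (T : Type u) [PartialOrder T] (κ : Cardinal.{u}) : Prop :=
  ∃ A : Set T, IsAntichain (· ≤ ·) A ∧ #A = κ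

def HasIndepOfSize {V : Type u} (G : SimpleGraph V) (κ : Cardinal.{u}) : Prop :=
  ∃ S : Set V, #S = κ ∧ ∀ x ∈ S, ∀ y ∈ S, ¬ G.Adj x y

def AllChainsCountable (T : Type u) [PartialOrder T] : Prop :=
  ∀ C : Set T, IsChain (· ≤ ·) C → #C ≤ ℵ₀

noncomputable def nodeHeight {T : Type u} [PartialOrder T] (hT : IsSetTree T) (t : T) : Ordinal.{u} :=
  @Ordinal.type {s : T // s < t} (· < ·) (hT t)

def KappaLambdaConnected {V : Type u} (G : SimpleGraph V) (κ μ : Cardinal.{u}) : Prop :=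
  ∀ S : Set V, #S < κ → (Sᶜ : Set V).Nonempty ∧ #((G.induce (Sᶜ : Set V)).ConnectedComponent) < μ

def KappaConnected {V : Type u} (G : SimpleGraph V) (κ : Cardinal.{u}) : Prop :=
  κ ≤ #V ∧ ∀ S : Set V, #S < κ → (G.induce (Sᶜ : Set V)).Connected

def ContainsSubdivisionOfComplete {V : Type u} (G : SimpleGraph V) (κ : Cardinal.{u}) : Prop :=
  ∃ (ι : Type u) (v : ι → V), #ι = κ ∧ Function.Injective v ∧
    ∃ p : ∀ i j : ι, G.Walk (v i) (v j),
      (∀ i j, i ≠ j → (p i j).IsPath) ∧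
      (∀ i j k l, i ≠ j → k ≠ l → (i, j) ≠ (k, l) → (i, j) ≠ (l, k) →
        ∀ x, x ∈ (p i j).support → x ∈ (p k l).support → x ∈ Set.range v) ∧
      (∀ i j k, i ≠ j → v k ∈ (p i j).support → k = i ∨ k = j)

def IsTGraph {T : Type u} [PartialOrder T] (G : SimpleGraph T) : Prop :=
  (∀ ⦃s t⦄, G.Adj s t → s < t ∨ t < s) ∧
  (∀ t s : T, s < t → ∃ r, s ≤ r ∧ r < t ∧ G.Adj r t)

/-!
The graph is a single apex joined to every vertex of a disjoint union of cliques, one on `Iic a`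
for each `a : κ.ord.ToType`. Since `κ` is a limit, for every `ν < κ` some clique has `ν⁺`
vertices, so fewer than `κ` colours never suffice. In a `K_κ` minor at most one branch set
contains the apex; the other `κ` branch sets are connected without it, so each lies in one
clique, and being pairwise adjacent they all lie in the same clique, which has fewer than `κ`
vertices.
-/

open Set Function

theorem Colorable'.mk_le_of_hom {V W : Type u} {G : SimpleGraph V} {μ : Cardinal.{u}}
    (hG : Colorable' G μ) (φ : (⊤ : SimpleGraph W) →g G) : #W ≤ μ := by
  obtain ⟨β, c, hβ, hc⟩ := hG
  refine (mk_le_of_injective (f := c ∘ φ) fun a b hab => ?_).trans hβ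
  by_contra hne
  exact hc (φ.map_adj hne) hab

theorem SimpleGraph.Reachable.eq_of_forall_adj {V β : Type*} {G : SimpleGraph V} {f : V → β}
    (hf : ∀ ⦃x y⦄, G.Adj x y → f x = f y) {x y : V} (h : G.Reachable x y) : f x = f y := by
  obtain ⟨w⟩ := h
  induction w with
  | nil => rfl
  | cons hadj _ ih => exact (hf hadj).trans ih

theorem mk_setOf_notMem_eq {ι V : Type u} {U : ι → Set V} (hU : Pairwise (Disjoint on U))
    (hι : ℵ₀ ≤ #ι) (v : V) : #{i | v ∉ U i} = #ι := by
  set J := {i | v ∉ U i}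
  have hJc : #(Jᶜ : Set ι) ≤ 1 := mk_le_one_iff_set_subsingleton.2 fun i hi j hj => by
    by_contra hij
    exact disjoint_left.1 (hU hij) (not_not.1 hi) (not_not.1 hj)
  refine (mk_set_le J).antisymm ?_
  have hle : #ι ≤ #J + 1 := by
    rw [← mk_sum_compl J]
    gcongr
  rcases lt_or_ge #J ℵ₀ with hfin | hinf
  · exact absurd (hle.trans_lt (add_lt_aleph0 hfin one_lt_aleph0)) hι.not_gt
  · rwa [add_one_eq hinf] at hle

theorem mk_le_of_pairwise_disjoint {ι V : Type u} {U : ι → Set V} {S : Set V}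
    (hU : Pairwise (Disjoint on U)) (hne : ∀ i, (U i).Nonempty) (hS : ∀ i, U i ⊆ S) :
    #ι ≤ #S := by
  choose x hx using hne
  refine mk_le_of_injective (f := fun i => (⟨x i, hS i (hx i)⟩ : S)) fun i j hij => ?_
  by_contra hij'
  have hxij : x i = x j := congrArg Subtype.val hij
  exact disjoint_left.1 (hU hij') (hx i) (hxij ▸ hx j)

section ConeOverCliques

variable {ι : Type u} {X : ι → Type u}

/-- `none` is the apex, adjacent to every other vertex; below it lies the disjoint union of the
complete graphs on the `X i`. -/
def coneOverCliques (X : ι → Type u) : SimpleGraph (Option (Σ i, X i)) where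
  Adj p q := p ≠ q ∧ ∀ x ∈ p, ∀ y ∈ q, x.1 = y.1
  symm := ⟨fun _ _ h => ⟨h.1.symm, fun x hx y hy => (h.2 y hy x hx).symm⟩⟩
  loopless := ⟨fun _ h => h.1 rfl⟩

namespace coneOverCliques

@[simp]
theorem adj_none_some (x : Σ i, X i) :
    (coneOverCliques X).Adj none (some x) := ⟨by simp, by simp⟩

@[simp]
theorem adj_some_some {x y : Σ i, X i} :
    (coneOverCliques X).Adj (some x) (some y) ↔ x ≠ y ∧ x.1 = y.1 := by
  simp [coneOverCliques]

protected theorem connected : (coneOverCliques X).Connected := by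
  have hub : ∀ p, (coneOverCliques X).Reachable none p := by
    rintro (_ | x)
    · rfl
    · exact (adj_none_some x).reachable
  exact ⟨fun p q => (hub p).symm.trans (hub q)⟩

def cliqueHom (i : ι) : (⊤ : SimpleGraph (X i)) →g coneOverCliques X where
  toFun x := some ⟨i, x⟩
  map_rel' h := by simpa using h

theorem exists_subset_range_of_induce_connected {U : Set (Option (Σ i, X i))}
    (hU : ((coneOverCliques X).induce U).Connected) (hnone : none ∉ U) :
    ∃ i, U ⊆ range (cliqueHom i) := by
  have hfst : ∀ ⦃p q : U⦄, ((coneOverCliques X).induce U).Adj p q →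
      (p : Option (Σ i, X i)).map Sigma.fst = (q : Option (Σ i, X i)).map Sigma.fst := by
    rintro ⟨_ | x, hp⟩ ⟨_ | y, hq⟩ h
    · exact absurd hp hnone
    · exact absurd hp hnone
    · exact absurd hq hnone
    · simpa using (adj_some_some.1 h).2
  obtain ⟨⟨p₀, hp₀⟩⟩ := hU.nonempty
  obtain ⟨⟨i, x⟩, rfl⟩ := Option.ne_none_iff_exists'.1 fun h => hnone (h ▸ hp₀)
  refine ⟨i, fun q hq => ?_⟩
  have hq_fst := (hU.preconnected ⟨_, hp₀⟩ ⟨q, hq⟩).eq_of_forall_adj hfst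
  rcases q with _ | ⟨j, y⟩
  · exact absurd hq hnone
  · obtain rfl : i = j := by simpa using hq_fst
    exact ⟨y, rfl⟩

theorem not_hasCompleteMinor {κ : Cardinal.{u}} (hκ : ℵ₀ ≤ κ)
    (hX : ∀ i, #(X i) < κ) : ¬ HasCompleteMinor (coneOverCliques X) κ := by
  rintro ⟨β, U, rfl, hne, hdisj, hconn, hadj⟩
  set J := {j | none ∉ U j}
  have hJ : #J = #β := mk_setOf_notMem_eq (fun i j => hdisj i j) hκ none
  obtain ⟨j₀, hj₀⟩ : J.Nonempty := by
    rw [← Set.nonempty_coe_sort, ← mk_ne_zero_iff, hJ]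
    exact (aleph0_pos.trans_le hκ).ne'
  obtain ⟨i₀, hi₀⟩ := exists_subset_range_of_induce_connected (hconn j₀) hj₀
  have hall : ∀ j : J, U j ⊆ range (cliqueHom i₀) := by
    rintro ⟨j, hj⟩
    obtain ⟨i, hi⟩ := exists_subset_range_of_induce_connected (hconn j) hj
    rcases eq_or_ne j j₀ with rfl | hjj₀
    · exact hi₀
    obtain ⟨_, hx, _, hy, hxy⟩ := hadj j j₀ hjj₀
    obtain ⟨a, rfl⟩ := hi hx
    obtain ⟨b, rfl⟩ := hi₀ hy
    obtain rfl : i = i₀ := (adj_some_some.1 hxy).2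
    exact hi
  have hJle : #J ≤ #(X i₀) :=
    (mk_le_of_pairwise_disjoint (U := fun j : J => U j)
      (fun j k hjk => hdisj j k (Subtype.coe_ne_coe.2 hjk)) (fun j => hne j) hall).trans
      mk_range_le
  exact (hJ ▸ hJle).not_gt (hX i₀)

end coneOverCliques

end ConeOverCliques

section InitialOrdinal

variable {κ : Cardinal.{u}}

theorem exists_mk_Iio_eq {c : Cardinal.{u}} (hc : c < κ) :
    ∃ a : κ.ord.ToType, #(Iio a) = c := by
  have : IsWellOrder κ.ord.ToType (· < ·) := isWellOrder_lt
  set a := Ordinal.ToType.mk ⟨c.ord, ord_lt_ord.2 hc⟩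
  have ha : Ordinal.typein (· < ·) a = c.ord :=
    congrArg Subtype.val (Ordinal.ToType.mk.symm_apply_apply _)
  refine ⟨a, ?_⟩
  rw [← card_ord c, ← ha, Ordinal.card_typein]
  rfl

theorem mk_Iic_toType_ord_lt (hκ : ℵ₀ ≤ κ) (a : κ.ord.ToType) : #(Iic a) < κ := by
  simpa using mk_Iic_lt a (by simp) (by simpa using hκ)

theorem mk_option_sigma_Iic_toType_ord (hκ : ℵ₀ ≤ κ) :
    #(Option (Σ a : κ.ord.ToType, Iic a)) = κ := by
  have hupper : #(Σ a : κ.ord.ToType, Iic a) ≤ κ :=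
    calc #(Σ a : κ.ord.ToType, Iic a) = sum fun a : κ.ord.ToType => #(Iic a) := mk_sigma _
      _ ≤ sum fun _ : κ.ord.ToType => κ :=
        sum_le_sum _ _ fun a => (mk_Iic_toType_ord_lt hκ a).le
      _ = κ := by rw [sum_const', mk_ord_toType, mul_eq_self hκ]
  have hlower : κ ≤ #(Σ a : κ.ord.ToType, Iic a) :=
    (mk_ord_toType κ).symm.trans_le <|
      mk_le_of_injective (f := fun a => ⟨a, a, mem_Iic.2 le_rfl⟩)
        fun _ _ h => congrArg Sigma.fst h
  rw [mk_option, hupper.antisymm hlower, add_one_eq hκ]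

end InitialOrdinal

/-- For every limit cardinal κ there is a connected graph of size κ
with chromatic number κ and no K_κ minor. -/
theorem stmt0 (κ : Cardinal.{u}) (hκ : ℵ₀ ≤ κ)
    (hlim : ∀ μ : Cardinal.{u}, μ < κ → Order.succ μ < κ) :
    ∃ (V : Type u) (G : SimpleGraph V), G.Connected ∧ #V = κ ∧
      ChromaticEq G κ ∧ ¬ HasCompleteMinor G κ := by
  let X : κ.ord.ToType → Type u := fun a => Iic a
  have hV : #(Option (Σ a, X a)) = κ := mk_option_sigma_Iic_toType_ord hκ
  refine ⟨_, coneOverCliques X, coneOverCliques.connected, hV,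
    ⟨⟨_, id, hV.le, fun _ _ h => h.ne⟩, fun ν hν hcol => ?_⟩,
    coneOverCliques.not_hasCompleteMinor hκ (mk_Iic_toType_ord_lt hκ)⟩
  obtain ⟨a, ha⟩ := exists_mk_Iio_eq (hlim ν hν)
  have hclique : Order.succ ν ≤ #(X a) := ha ▸ mk_le_mk_of_subset Iio_subset_Iic_self
  exact (Order.lt_succ ν).not_ge (hclique.trans (hcol.mk_le_of_hom (coneOverCliques.cliqueHom a)))
end

section
/- If a Suslin tree exists (an ω₁-tree of size ω₁ with no uncountable branches and no uncountable antichains), then there is a graph of size ω₁ with no uncountable independent set (hence with uncountable chromatic number) and with no K_{ω₁} minor; namely, the comparability graph of the Suslin tree. -/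
universe u

open Cardinal

section aux
variable {T : Type u} [PartialOrder T]

lemma comp_of_lt (hT : IsSetTree T) {x y z : T} (hx : x < z) (hy : y < z) :
    x ≤ y ∨ y ≤ x := by
  haveI := hT z
  rcases trichotomous (r := ((· < ·) : {s : T // s < z} → _ → Prop)) ⟨x, hx⟩ ⟨y, hy⟩ with
    h | h | h
  · exact Or.inl (le_of_lt (Subtype.mk_lt_mk.mp h))
  · exact Or.inl (le_of_eq (congrArg Subtype.val h))
  · exact Or.inr (le_of_lt (Subtype.mk_lt_mk.mp h))

lemma comp_of_le (hT : IsSetTree T) {x y z : T} (hx : x ≤ z) (hy : y ≤ z) :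
    x ≤ y ∨ y ≤ x := by
  rcases hx.lt_or_eq with hx | rfl
  · rcases hy.lt_or_eq with hy | rfl
    · exact comp_of_lt hT hx hy
    · exact Or.inl hx.le
  · exact Or.inr hy

lemma tree_wf (hT : IsSetTree T) : WellFounded ((· < ·) : T → T → Prop) := by
  constructor
  intro t
  have key : ∀ s : {s : T // s < t}, Acc ((· < ·) : T → T → Prop) (s : T) := by
    haveI := hT t
    intro s
    induction s using (IsWellFounded.wf (r := ((· < ·) : {s : T // s < t} → _ → Prop))).induction with
    | _ s ih =>
      constructor
      intro r hr
      exact ih ⟨r, hr.trans s.2⟩ (Subtype.mk_lt_mk.mpr hr)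
  constructor
  intro s hs
  exact key ⟨s, hs⟩

lemma walk_le (hT : IsSetTree T) {C : Set T} {m : T}
    (hmin : ∀ x ∈ C, ¬ x < m) :
    ∀ {u v : C}, ((compGraph T).induce C).Walk u v → m ≤ (u : T) → m ≤ (v : T) := by
  intro u v w
  induction w with
  | nil => exact id
  | @cons a b c h p ih =>
    intro ha
    apply ih
    have hadj : (compGraph T).Adj (a : T) (b : T) := h
    rw [compGraph, SimpleGraph.fromRel_adj] at hadj
    obtain ⟨hne, hab | hba⟩ := hadj
    · exact ha.trans hab
    · have hb : (b : T) < (a : T) := lt_of_le_of_ne hba (fun e => hne e.symm)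
      rcases ha.lt_or_eq with hma | rfl
      · rcases comp_of_lt hT hma hb with h' | h'
        · exact h'
        · rcases h'.lt_or_eq with h'' | rfl
          · exact absurd h'' (hmin _ b.2)
          · exact le_rfl
      · exact absurd hb (hmin _ b.2)

lemma antichain_le_aleph0 (hsize : #T = Cardinal.aleph 1)
    (hanti : ¬ HasAntichainOfSize T (Cardinal.aleph 1))
    {A : Set T} (hA : IsAntichain (· ≤ ·) A) : #A ≤ ℵ₀ := by
  have h1 : #A ≤ Cardinal.aleph 1 := hsize ▸ Cardinal.mk_set_le A
  have h2 : #A ≠ Cardinal.aleph 1 := fun h => hanti ⟨A, hA, h⟩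
  have h3 : #A < Cardinal.aleph 1 := lt_of_le_of_ne h1 h2
  rw [← Cardinal.succ_aleph0] at h3
  exact Order.lt_succ_iff.mp h3

end aux

/-- if T is a Suslin tree, its comparability graph has size ω₁, no
uncountable independent set (hence uncountable chromatic number) and no K_{ω₁} minor. -/
theorem stmt2 (T : Type u) [PartialOrder T] (hT : IsSetTree T)
    (hsize : #T = Cardinal.aleph 1)
    (hbranch : ¬ HasChainOfSize T (Cardinal.aleph 1))
    (hanti : ¬ HasAntichainOfSize T (Cardinal.aleph 1)) :
    #T = Cardinal.aleph 1 ∧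
    ¬ HasIndepOfSize (compGraph T) (Cardinal.aleph 1) ∧
    ¬ Colorable' (compGraph T) ℵ₀ ∧
    ¬ HasCompleteMinor (compGraph T) (Cardinal.aleph 1) := by
  refine ⟨hsize, ?_, ?_, ?_⟩
  · -- no uncountable independent set
    rintro ⟨S, hScard, hSind⟩
    apply hanti
    refine ⟨S, ?_, hScard⟩
    intro x hx y hy hxy hle
    exact hSind x hx y hy (by
      rw [compGraph, SimpleGraph.fromRel_adj]; exact ⟨hxy, Or.inl hle⟩)
  · -- not countably colorable
    rintro ⟨β, c, hβ, hc⟩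
    have hfiber : ∀ b : β, #(c ⁻¹' {b} : Set T) ≤ ℵ₀ := by
      intro b
      refine antichain_le_aleph0 hsize hanti ?_
      intro x hx y hy hxy hle
      have hadj : (compGraph T).Adj x y := by
        rw [compGraph, SimpleGraph.fromRel_adj]; exact ⟨hxy, Or.inl hle⟩
      exact hc hadj (hx.trans hy.symm)
    have hTle : #T ≤ ℵ₀ := by
      calc #T = #(Σ b : β, (c ⁻¹' {b} : Set T)) :=
            (Cardinal.mk_congr (Equiv.sigmaFiberEquiv c)).symm
        _ = Cardinal.sum (fun b : β => #(c ⁻¹' {b} : Set T)) := Cardinal.mk_sigma _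
        _ ≤ Cardinal.sum (fun _ : β => ℵ₀) := Cardinal.sum_le_sum _ _ hfiber
        _ = #β * ℵ₀ := Cardinal.sum_const' β ℵ₀
        _ ≤ ℵ₀ * ℵ₀ := mul_le_mul_left hβ ℵ₀
        _ = ℵ₀ := Cardinal.aleph0_mul_aleph0
    rw [hsize] at hTle
    exact absurd hTle (not_le.mpr Cardinal.aleph0_lt_aleph_one)
  · -- no complete minor
    rintro ⟨ι, U, hι, hne, hdis, hconn, hadj⟩
    have hminex : ∀ i, ∃ m ∈ U i, ∀ x ∈ U i, ¬ x < m :=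
      fun i => (tree_wf hT).has_min (U i) (hne i)
    choose m hmU hmmin using hminex
    have hle : ∀ i, ∀ x ∈ U i, m i ≤ x := by
      intro i x hx
      obtain ⟨w⟩ := (hconn i).preconnected ⟨m i, hmU i⟩ ⟨x, hx⟩
      exact walk_le hT (hmmin i) w le_rfl
    have hcomp : ∀ i j, i ≠ j → m i ≤ m j ∨ m j ≤ m i := by
      intro i j hij
      obtain ⟨x, hx, y, hy, hxy⟩ := hadj i j hij
      rw [compGraph, SimpleGraph.fromRel_adj] at hxy
      obtain ⟨hne', h | h⟩ := hxy
      · exact comp_of_le hT ((hle i x hx).trans h) (hle j y hy)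
      · exact comp_of_le hT (hle i x hx) ((hle j y hy).trans h)
    have hinj : Function.Injective m := by
      intro i j hij
      by_contra hne'
      exact Set.disjoint_left.mp (hdis i j hne') (hmU i) (hij ▸ hmU j)
    apply hbranch
    refine ⟨Set.range m, ?_, ?_⟩
    · rintro _ ⟨i, rfl⟩ _ ⟨j, rfl⟩ hne'
      exact hcomp i j (fun h => hne' (h ▸ rfl))
    · rw [Cardinal.mk_range_eq m hinj, hι]
end

section
/- Suppose κ is a regular uncountable cardinal. If the comparability graph of a tree T with no κ-branch is considered, then K_κ is not a minor of this comparability graph. -/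
universe u

open Cardinal

/-!
Since the predecessors of a node form a chain, induction along a walk inside a connected set `U`
of the comparability graph yields an element of `U` below both ends of the walk; as `<` is
well-founded on a tree, a minimal element of `U` is therefore its least element, its root. If
`x ∈ U` and `y ∈ V` are adjacent, say `x ≤ y`, then the roots of `U` and `V` both lie below `y`,
hence are comparable. So the roots of the branch sets of a `K_κ` minor form a chain of size `κ`.
-/

namespace IsSetTree

variable {T : Type u} [PartialOrder T]

theorem le_total_of_le (hT : IsSetTree T) {a b t : T} (ha : a ≤ t) (hb : b ≤ t) :
    a ≤ b ∨ b ≤ a := by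
  rcases ha.eq_or_lt with rfl | ha
  · exact Or.inr hb
  rcases hb.eq_or_lt with rfl | hb
  · exact Or.inl ha.le
  have := hT t
  rcases trichotomous_of (· < ·) (⟨a, ha⟩ : {s // s < t}) ⟨b, hb⟩ with h | h | h
  · exact Or.inl h.le
  · exact Or.inl (congrArg Subtype.val h).le
  · exact Or.inr h.le

theorem wellFounded_lt (hT : IsSetTree T) : WellFounded ((· < ·) : T → T → Prop) := by
  refine ⟨fun t => ⟨t, fun s hst => ?_⟩⟩
  suffices ∀ x : {s : T // s < t}, Acc (· < ·) x.val from this ⟨s, hst⟩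
  intro x
  induction x using (hT t).wf.induction with
  | _ x ih => exact ⟨x.val, fun y hyx => ih ⟨y, hyx.trans x.2⟩ hyx⟩

theorem exists_le_le_of_walk (hT : IsSetTree T) (U : Set T) {x y : U}
    (p : ((compGraph T).induce U).Walk x y) : ∃ r ∈ U, r ≤ x.val ∧ r ≤ y.val := by
  induction p with
  | nil => exact ⟨_, Subtype.coe_prop _, le_rfl, le_rfl⟩
  | @cons x z y hxz _ ih =>
    obtain ⟨r, hrU, hrz, hry⟩ := ih
    rcases ((SimpleGraph.fromRel_adj _ _ _).1 hxz).2 with hxz | hzx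
    · rcases hT.le_total_of_le hrz hxz with hrx | hxr
      · exact ⟨r, hrU, hrx, hry⟩
      · exact ⟨x.val, x.2, le_rfl, hxr.trans hry⟩
    · exact ⟨r, hrU, hrz.trans hzx, hry⟩

theorem exists_least_of_connected (hT : IsSetTree T) {U : Set T}
    (hU : ((compGraph T).induce U).Connected) : ∃ m ∈ U, ∀ s ∈ U, m ≤ s := by
  obtain ⟨⟨x, hx⟩⟩ := hU.nonempty
  obtain ⟨m, hmU, hmin⟩ := hT.wellFounded_lt.has_min U ⟨x, hx⟩
  refine ⟨m, hmU, fun s hsU => ?_⟩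
  obtain ⟨r, hrU, hrm, hrs⟩ := hT.exists_le_le_of_walk U (hU.preconnected ⟨m, hmU⟩ ⟨s, hsU⟩).some
  rcases hrm.eq_or_lt with rfl | hrm
  · exact hrs
  · exact absurd hrm (hmin r hrU)

theorem le_total_of_exists_adj (hT : IsSetTree T) {U V : Set T} {a b : T}
    (ha : ∀ x ∈ U, a ≤ x) (hb : ∀ y ∈ V, b ≤ y)
    (hUV : ∃ x ∈ U, ∃ y ∈ V, (compGraph T).Adj x y) : a ≤ b ∨ b ≤ a := by
  obtain ⟨x, hxU, y, hyV, hxy⟩ := hUV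
  rcases ((SimpleGraph.fromRel_adj _ _ _).1 hxy).2 with hxy | hyx
  · exact hT.le_total_of_le ((ha x hxU).trans hxy) (hb y hyV)
  · exact hT.le_total_of_le (ha x hxU) ((hb y hyV).trans hyx)

end IsSetTree

theorem stmt3_general (κ : Cardinal.{u})
    (T : Type u) [PartialOrder T] (hT : IsSetTree T)
    (hbranch : ¬ HasChainOfSize T κ) :
    ¬ HasCompleteMinor (compGraph T) κ := by
  rintro ⟨ι, U, hcard, -, hdisj, hconn, hadj⟩
  choose root hrootU hroot_le using fun i => hT.exists_least_of_connected (hconn i)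
  have root_injective : Function.Injective root := fun i j hij => by
    by_contra hne
    exact (hdisj i j hne).ne_of_mem (hrootU i) (hrootU j) hij
  refine hbranch ⟨Set.range root, ?_, by rw [mk_range_eq root root_injective, hcard]⟩
  rintro _ ⟨i, rfl⟩ _ ⟨j, rfl⟩ hne
  exact hT.le_total_of_exists_adj (hroot_le i) (hroot_le j)
    (hadj i j fun h => hne (congrArg root h))

/-- for κ regular uncountable, the comparability graph of a tree with
no κ-branch has no K_κ minor. -/
theorem stmt3 (κ : Cardinal.{u}) (hreg : κ.IsRegular) (hunc : ℵ₀ < κ)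
    (T : Type u) [PartialOrder T] (hT : IsSetTree T)
    (hbranch : ¬ HasChainOfSize T κ) :
    ¬ HasCompleteMinor (compGraph T) κ :=
  stmt3_general κ T hT hbranch
end

section
/- The uncountable Hadwiger conjecture number 𝔥𝔠 (the least size of an uncountably chromatic graph with no K_{ω₁} minor) has uncountable cofinality. More precisely: if κ is the supremum of a strictly increasing ω-sequence of cardinals (κ_n), and every graph of size κ_n either has a countable proper coloring or contains K_{ω₁} as a minor, then every graph of size κ either has a countable proper coloring or contains K_{ω₁} as a minor. -/
/-!
Write `κ = ⨆ kₙ` as the disjoint union of countably many pieces `Vₙ` with `|Vₙ| = kₙ` (possible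
since `κ ≥ ℵ₀`, so `κ = ∑ kₙ`). If some induced subgraph `G[Vₙ]` has a `K_{ω₁}` minor, so has `G`.
Otherwise every `G[Vₙ]` is countably colourable, and the colourings `cₙ` combine to the countable
colouring `v ↦ (n, cₙ v)` of `G` for `v ∈ Vₙ`.
-/

universe u

open Cardinal

open SimpleGraph

theorem Cardinal.natCast_le_of_strictMono {ks : ℕ → Cardinal.{u}} (hks : StrictMono ks) (n : ℕ) :
    (n : Cardinal) ≤ ks n := by
  induction n with
  | zero => exact zero_le
  | succ n ih =>
    rw [Nat.cast_succ, ← succ_natCast]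
    exact Order.succ_le_of_lt (ih.trans_lt (hks n.lt_succ_self))

theorem Cardinal.sum_eq_iSup_of_strictMono {ks : ℕ → Cardinal.{u}} (hks : StrictMono ks) :
    sum (fun n : ULift.{u} ℕ => ks n.down) = ⨆ n, ks n := by
  have hsup : ⨆ n : ULift.{u} ℕ, ks n.down = ⨆ n, ks n := ULift.down_surjective.iSup_comp ks
  have hℵ₀ : ℵ₀ ≤ ⨆ n, ks n := aleph0_le.mpr fun n =>
    (natCast_le_of_strictMono hks n).trans (le_ciSup bddAbove_of_small n)
  rw [sum_eq_iSup_of_mk_le_iSup (by simp) (by simpa [hsup] using hℵ₀), hsup]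

theorem exists_fiber_mk_eq_of_mk_eq_sum {V ι : Type u} {c : ι → Cardinal.{u}} (h : #V = sum c) :
    ∃ f : V → ι, ∀ i, #{v | f v = i} = c i := by
  obtain ⟨e⟩ := Cardinal.eq.mp (show #V = #(Σ i, (c i).out) by simp [mk_sigma, h])
  refine ⟨fun v => (e v).1, fun i => ?_⟩
  rw [← mk_out (c i)]
  exact mk_congr ((e.subtypeEquiv fun _ => Iff.rfl).trans (Equiv.sigmaSubtype i))

theorem HasCompleteMinor.map {V W : Type u} {G : SimpleGraph V} {H : SimpleGraph W} {μ : Cardinal.{u}}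
    (φ : G ↪g H) (h : HasCompleteMinor G μ) : HasCompleteMinor H μ := by
  obtain ⟨ι, U, hι, hne, hdisj, hconn, hadj⟩ := h
  refine ⟨ι, fun i => φ '' U i, hι, fun i => (hne i).image _,
    fun i j hij => Set.disjoint_image_of_injective φ.injective (hdisj i j hij), fun i => ?_, ?_⟩
  · refine (hconn i).map (induceHom φ.toHom (Set.mapsTo_image _ _)) ?_
    rintro ⟨_, x, hx, rfl⟩
    exact ⟨⟨x, hx⟩, rfl⟩
  · intro i j hij
    obtain ⟨x, hx, y, hy, hxy⟩ := hadj i j hij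
    exact ⟨φ x, Set.mem_image_of_mem _ hx, φ y, Set.mem_image_of_mem _ hy, φ.map_adj_iff.mpr hxy⟩

theorem colorable'_mul_of_fibers {V ι : Type u} {G : SimpleGraph V} {μ : Cardinal.{u}} (f : V → ι)
    (h : ∀ i, Colorable' (G.induce {v | f v = i}) μ) : Colorable' G (#ι * μ) := by
  choose β c hβ hc using h
  refine ⟨Σ i, β i, fun v => ⟨f v, c (f v) ⟨v, rfl⟩⟩, ?_, ?_⟩
  · calc #(Σ i, β i) = sum fun i => #(β i) := mk_sigma _
      _ ≤ sum fun _ : ι => μ := sum_le_sum _ _ hβ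
      _ = #ι * μ := sum_const' _ _
  · suffices ∀ x y (i j : ι) (hx : f x = i) (hy : f y = j), G.Adj x y →
        (⟨i, c i ⟨x, hx⟩⟩ : Σ i, β i) ≠ ⟨j, c j ⟨y, hy⟩⟩ from
      fun x y hxy => this x y _ _ rfl rfl hxy
    rintro x y i j hx hy hxy hcol
    obtain ⟨rfl, hcol⟩ := Sigma.mk.inj_iff.mp hcol
    exact hc i (show (G.induce _).Adj ⟨x, hx⟩ ⟨y, hy⟩ from hxy) (eq_of_heq hcol)

/-- the Hadwiger number has uncountable cofinality. -/
theorem stmt7 (κ : Cardinal.{u}) (ks : ℕ → Cardinal.{u})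
    (hmono : StrictMono ks)
    (hsup : κ = ⨆ n, ks n)
    (hstep : ∀ n, ∀ (V : Type u) (G : SimpleGraph V), #V = ks n →
      Colorable' G ℵ₀ ∨ HasCompleteMinor G (Cardinal.aleph 1)) :
    ∀ (V : Type u) (G : SimpleGraph V), #V = κ →
      Colorable' G ℵ₀ ∨ HasCompleteMinor G (Cardinal.aleph 1) := by
  intro V G hV
  obtain ⟨f, hf⟩ := exists_fiber_mk_eq_of_mk_eq_sum
    (hV.trans (hsup.trans (sum_eq_iSup_of_strictMono hmono).symm))
  by_cases hminor : ∃ n, HasCompleteMinor (G.induce {v | f v = n}) (aleph 1)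
  · obtain ⟨n, hn⟩ := hminor
    exact Or.inr (hn.map (Embedding.induce _))
  · push Not at hminor
    have hcol := colorable'_mul_of_fibers f fun n =>
      (hstep n.down _ _ (hf n)).resolve_right (hminor n)
    rw [mk_uLift, mk_nat, lift_aleph0, aleph0_mul_aleph0] at hcol
    exact Or.inl hcol
end

section
/- Suppose κ is an infinite cardinal. If a graph G is κ-connected (i.e., G remains connected after the removal of any set of fewer than κ vertices, and has at least κ vertices), then G contains a subdivision of K_κ; in particular, K_κ is a minor of G. -/
/-!
Index the branch vertices by the initial ordinal of `κ` and well-order all pairs of indices so that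
every pair has fewer than `κ` predecessors and each diagonal pair `(c, c)` precedes the pairs
involving `c`. Going through the pairs by transfinite recursion, a diagonal pair picks a fresh
vertex and any other pair a path between its two branch vertices avoiding every vertex used so
far except its ends; since fewer than `κ` vertices (finitely many per earlier pair) have been
used, `κ`-connectivity provides both. For the `K_κ` minor, well-order the indices and let the
branch set of `i` consist of its branch vertex and its paths to all later branch vertices, each
path without its last vertex.
-/

universe u

open Cardinal

open SimpleGraph Set

theorem Cardinal.mk_iUnion_lt_of_finite {α ι : Type u} {κ : Cardinal.{u}} (hκ : ℵ₀ ≤ κ)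
    {f : ι → Set α} (hι : #ι < κ) (hf : ∀ i, (f i).Finite) : #(⋃ i, f i) < κ := by
  rcases finite_or_infinite ι with _ | _
  · exact (Set.finite_iUnion hf).lt_aleph0.trans_le hκ
  · calc #(⋃ i, f i) ≤ #ι * ⨆ i, #(f i) := mk_iUnion_le f
      _ ≤ #ι * ℵ₀ := by
          gcongr
          exact ciSup_le' fun i => le_aleph0_iff_set_countable.mpr (hf i).countable
      _ = #ι := mul_aleph0_eq (aleph0_le_mk ι)
      _ < κ := hι

namespace SimpleGraph.Walk

variable {V : Type*} {G : SimpleGraph V} {u v w : V}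

theorem IsPath.end_notMem_support_dropLast {p : G.Walk u v} (hp : p.IsPath) (huv : u ≠ v) :
    v ∉ p.dropLast.support := by
  have hnd := hp.support_nodup
  rw [← support_dropLast_concat (not_nil_of_ne huv), List.nodup_append] at hnd
  exact fun hv => hnd.2.2 v hv v (List.mem_singleton_self v) rfl

end SimpleGraph.Walk

section PairOrder

variable {I : Type*} [LinearOrder I]

def pairKey (p : I × I) : I ×ₗ Bool ×ₗ I ×ₗ I :=
  toLex (max p.1 p.2, toLex (decide (p.1 ≠ p.2), toLex p))

def PairLT (p q : I × I) : Prop := pairKey p < pairKey q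

theorem pairKey_injective : Function.Injective (pairKey (I := I)) := fun p q h => by
  simp_all [pairKey]

theorem wellFounded_pairLT [WellFoundedLT I] : WellFounded (PairLT (I := I)) :=
  InvImage.wf pairKey wellFounded_lt

theorem pairLT_or_pairLT_of_ne {p q : I × I} (h : p ≠ q) : PairLT p q ∨ PairLT q p :=
  lt_or_gt_of_ne (pairKey_injective.ne h)

theorem pairLT_diag_of_le {a b c : I} (hab : a ≠ b) (hc : c ≤ max a b) :
    PairLT (c, c) (a, b) := by
  rcases hc.lt_or_eq with hc | hc
  · simp [PairLT, pairKey, Prod.Lex.lt_iff, hc]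
  · simp [PairLT, pairKey, Prod.Lex.lt_iff, hc, hab]

theorem setOf_pairLT_subset (p : I × I) :
    {q | PairLT q p} ⊆ Iic (max p.1 p.2) ×ˢ Iic (max p.1 p.2) := by
  intro q hq
  have hmax : max q.1 q.2 ≤ max p.1 p.2 := Prod.Lex.monotone_fst (pairKey q) (pairKey p) hq.le
  exact ⟨le_trans (le_max_left _ _) hmax, le_trans (le_max_right _ _) hmax⟩

theorem mk_setOf_pairLT_lt {κ : Cardinal} (hκ : ℵ₀ ≤ κ) (p : κ.ord.ToType × κ.ord.ToType) :
    #{q | PairLT q p} < κ := by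
  have hIic : #(Iic (max p.1 p.2)) < κ := by
    simpa using mk_Iic_lt (max p.1 p.2) (by simp [Ordinal.type_toType]) (by simpa using hκ)
  calc #{q | PairLT q p} ≤ #(Iic (max p.1 p.2) ×ˢ Iic (max p.1 p.2)) :=
        mk_le_mk_of_subset (setOf_pairLT_subset p)
    _ = #(Iic (max p.1 p.2)) * #(Iic (max p.1 p.2)) := by
        rw [mk_congr (Equiv.Set.prod _ _), mk_prod, lift_id]
    _ < κ := mul_lt_of_lt hκ hIic hIic

end PairOrder

namespace KappaConnected

variable {V : Type u} {G : SimpleGraph V} {κ : Cardinal.{u}}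

theorem exists_notMem (hG : KappaConnected G κ) {T : Set V} (hT : #T < κ) : ∃ x, x ∉ T :=
  let ⟨x⟩ := (hG.2 T hT).nonempty
  ⟨x, x.2⟩

theorem exists_isPath_avoiding (hG : KappaConnected G κ) {T : Set V} (hT : #T < κ) {x y : V}
    (hx : x ∉ T) (hy : y ∉ T) : ∃ w : G.Walk x y, w.IsPath ∧ ∀ z ∈ w.support, z ∉ T := by
  classical
  obtain ⟨w⟩ := (hG.2 T hT).preconnected ⟨x, hx⟩ ⟨y, hy⟩
  let w' : G.Walk x y := w.map (Embedding.induce Tᶜ).toHom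
  refine ⟨w'.bypass, w'.bypass_isPath, fun z hz => ?_⟩
  have hz' : z ∈ w.support.map (Embedding.induce Tᶜ).toHom :=
    Walk.support_map _ w ▸ w'.support_bypass_subset_support hz
  obtain ⟨z', -, rfl⟩ := List.mem_map.mp hz'
  exact z'.2

abbrev WalkData (G : SimpleGraph V) : Type u := Σ x y : V, G.Walk x y

def WalkData.supportSet (w : WalkData G) : Set V := {z | z ∈ w.2.2.support}

def usedBefore (p : κ.ord.ToType × κ.ord.ToType) (prev : ∀ q, PairLT q p → WalkData G) :
    Set V :=
  ⋃ q : {q // PairLT q p}, (prev q q.2).supportSet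

theorem mk_usedBefore_lt (hκ : ℵ₀ ≤ κ) (p : κ.ord.ToType × κ.ord.ToType)
    (prev : ∀ q, PairLT q p → WalkData G) : #(usedBefore p prev) < κ :=
  Cardinal.mk_iUnion_lt_of_finite hκ (mk_setOf_pairLT_lt hκ p) fun _ => List.finite_toSet _

section Construction

variable (hκ : ℵ₀ ≤ κ) (hG : KappaConnected G κ)

noncomputable def extendWalks (p : κ.ord.ToType × κ.ord.ToType)
    (prev : ∀ q, PairLT q p → WalkData G) : WalkData G :=
  if h : p.1 = p.2 then
    let x := (hG.exists_notMem (mk_usedBefore_lt hκ p prev)).choose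
    ⟨x, x, .nil⟩
  else
    let x := (prev (p.1, p.1) (pairLT_diag_of_le h (le_max_left _ _))).1
    let y := (prev (p.2, p.2) (pairLT_diag_of_le h (le_max_right _ _))).1
    have hT : #(usedBefore p prev \ {x, y} : Set V) < κ :=
      (mk_le_mk_of_subset sdiff_subset).trans_lt (mk_usedBefore_lt hκ p prev)
    ⟨x, y, (hG.exists_isPath_avoiding hT (by simp) (by simp)).choose⟩

noncomputable def chosenWalk : κ.ord.ToType × κ.ord.ToType → WalkData G :=
  wellFounded_pairLT.fix (extendWalks hκ hG)

theorem chosenWalk_eq (p : κ.ord.ToType × κ.ord.ToType) :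
    chosenWalk hκ hG p = extendWalks hκ hG p fun q _ => chosenWalk hκ hG q :=
  wellFounded_pairLT.fix_eq _ _

def usedVertices (p : κ.ord.ToType × κ.ord.ToType) : Set V :=
  usedBefore p fun q _ => chosenWalk hκ hG q

noncomputable def branchVertex (a : κ.ord.ToType) : V := (chosenWalk hκ hG (a, a)).1

theorem chosenWalk_diag (a : κ.ord.ToType) :
    branchVertex hκ hG a ∉ usedVertices hκ hG (a, a) ∧
      chosenWalk hκ hG (a, a) = ⟨branchVertex hκ hG a, branchVertex hκ hG a, .nil⟩ := by
  have h := chosenWalk_eq hκ hG (a, a)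
  simp only [extendWalks, dif_pos] at h
  have hv : branchVertex hκ hG a = _ := congrArg Sigma.fst h
  rw [hv]
  exact ⟨(hG.exists_notMem (mk_usedBefore_lt hκ _ _)).choose_spec, h⟩

theorem chosenWalk_offDiag {a b : κ.ord.ToType} (hab : a ≠ b) :
    ∃ w : G.Walk (branchVertex hκ hG a) (branchVertex hκ hG b), w.IsPath ∧
      (∀ z ∈ w.support, z ∈ usedVertices hκ hG (a, b) →
        z = branchVertex hκ hG a ∨ z = branchVertex hκ hG b) ∧
      chosenWalk hκ hG (a, b) = ⟨_, _, w⟩ := by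
  rw [chosenWalk_eq]
  simp only [extendWalks, dif_neg hab]
  generalize_proofs hw
  obtain ⟨hpath, havoid⟩ := hw.choose_spec
  refine ⟨_, hpath, fun z hz hzU => ?_, rfl⟩
  by_contra hne
  exact havoid z hz ⟨hzU, by simpa [branchVertex] using hne⟩

theorem supportSet_subset_usedVertices {p q : κ.ord.ToType × κ.ord.ToType} (h : PairLT q p) :
    (chosenWalk hκ hG q).supportSet ⊆ usedVertices hκ hG p :=
  subset_iUnion_of_subset ⟨q, h⟩ subset_rfl

theorem branchVertex_mem_usedVertices {a : κ.ord.ToType} {p : κ.ord.ToType × κ.ord.ToType}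
    (h : PairLT (a, a) p) : branchVertex hκ hG a ∈ usedVertices hκ hG p :=
  supportSet_subset_usedVertices hκ hG h (Walk.start_mem_support _)

theorem branchVertex_injective : Function.Injective (branchVertex hκ hG) := by
  intro a b hab
  by_contra hne
  wlog h : PairLT (a, a) (b, b) generalizing a b
  · exact this hab.symm (Ne.symm hne)
      ((pairLT_or_pairLT_of_ne (by simpa using hne)).resolve_left h)
  exact (chosenWalk_diag hκ hG b).1 (hab ▸ branchVertex_mem_usedVertices hκ hG h)

theorem chosenWalk_ends (p : κ.ord.ToType × κ.ord.ToType) :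
    (chosenWalk hκ hG p).1 = branchVertex hκ hG p.1 ∧
      (chosenWalk hκ hG p).2.1 = branchVertex hκ hG p.2 := by
  obtain ⟨a, b⟩ := p
  obtain rfl | hab := eq_or_ne a b
  · rw [(chosenWalk_diag hκ hG a).2]
    exact ⟨rfl, rfl⟩
  · obtain ⟨w, -, -, hw⟩ := chosenWalk_offDiag hκ hG hab
    rw [hw]
    exact ⟨rfl, rfl⟩

noncomputable def pathBetween (a b : κ.ord.ToType) :
    G.Walk (branchVertex hκ hG a) (branchVertex hκ hG b) :=
  (chosenWalk hκ hG (a, b)).2.2.copy (chosenWalk_ends hκ hG _).1 (chosenWalk_ends hκ hG _).2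

theorem mem_supportSet_of_mem_support_pathBetween {a b : κ.ord.ToType} {z : V}
    (hz : z ∈ (pathBetween hκ hG a b).support) : z ∈ (chosenWalk hκ hG (a, b)).supportSet := by
  simpa [pathBetween, WalkData.supportSet] using hz

theorem pathBetween_eq {a b : κ.ord.ToType}
    {w : G.Walk (branchVertex hκ hG a) (branchVertex hκ hG b)}
    (hw : chosenWalk hκ hG (a, b) = ⟨_, _, w⟩) : pathBetween hκ hG a b = w := by
  have key : ∀ (σ : WalkData G) (h₁ : σ.1 = branchVertex hκ hG a)
      (h₂ : σ.2.1 = branchVertex hκ hG b), σ = ⟨_, _, w⟩ → σ.2.2.copy h₁ h₂ = w := by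
    rintro _ _ _ rfl
    rfl
  exact key _ _ _ hw

theorem isPath_pathBetween {a b : κ.ord.ToType} (hab : a ≠ b) :
    (pathBetween hκ hG a b).IsPath := by
  obtain ⟨w, hpath, -, hw⟩ := chosenWalk_offDiag hκ hG hab
  rwa [pathBetween_eq hκ hG hw]

theorem eq_or_eq_of_mem_support_pathBetween {a b : κ.ord.ToType} (hab : a ≠ b) {z : V}
    (hz : z ∈ (pathBetween hκ hG a b).support) (hzU : z ∈ usedVertices hκ hG (a, b)) :
    z = branchVertex hκ hG a ∨ z = branchVertex hκ hG b := by
  obtain ⟨w, -, havoid, hw⟩ := chosenWalk_offDiag hκ hG hab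
  rw [pathBetween_eq hκ hG hw] at hz
  exact havoid z hz hzU

theorem mem_range_of_mem_support_pathBetween {a b c d : κ.ord.ToType} (hab : a ≠ b) (hcd : c ≠ d)
    (hne : (a, b) ≠ (c, d)) {z : V} (hz₁ : z ∈ (pathBetween hκ hG a b).support)
    (hz₂ : z ∈ (pathBetween hκ hG c d).support) : z ∈ range (branchVertex hκ hG) := by
  wlog h : PairLT (a, b) (c, d) generalizing a b c d
  · exact this hcd hab hne.symm hz₂ hz₁ ((pairLT_or_pairLT_of_ne hne).resolve_left h)
  have hz₁ := mem_supportSet_of_mem_support_pathBetween hκ hG hz₁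
  rcases eq_or_eq_of_mem_support_pathBetween hκ hG hcd hz₂
    (supportSet_subset_usedVertices hκ hG h hz₁) with rfl | rfl
  exacts [mem_range_self c, mem_range_self d]

theorem eq_or_eq_of_branchVertex_mem_support_pathBetween {a b k : κ.ord.ToType} (hab : a ≠ b)
    (hk : branchVertex hκ hG k ∈ (pathBetween hκ hG a b).support) : k = a ∨ k = b := by
  have hne : (k, k) ≠ (a, b) := fun h =>
    hab ((Prod.ext_iff.mp h).1.symm.trans (Prod.ext_iff.mp h).2)
  rcases pairLT_or_pairLT_of_ne hne with h | h
  · exact (eq_or_eq_of_mem_support_pathBetween hκ hG hab hk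
      (branchVertex_mem_usedVertices hκ hG h)).imp
      (fun h => branchVertex_injective hκ hG h) (fun h => branchVertex_injective hκ hG h)
  · exact absurd (supportSet_subset_usedVertices hκ hG h
      (mem_supportSet_of_mem_support_pathBetween hκ hG hk)) (chosenWalk_diag hκ hG k).1

end Construction

theorem containsSubdivisionOfComplete (hκ : ℵ₀ ≤ κ) (hG : KappaConnected G κ) :
    ContainsSubdivisionOfComplete G κ :=
  ⟨κ.ord.ToType, branchVertex hκ hG, mk_ord_toType κ, branchVertex_injective hκ hG,
    pathBetween hκ hG, fun _ _ hab => isPath_pathBetween hκ hG hab,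
    fun _ _ _ _ hab hcd hne _ _ hz₁ hz₂ =>
      mem_range_of_mem_support_pathBetween hκ hG hab hcd hne hz₁ hz₂,
    fun _ _ _ hab hk => eq_or_eq_of_branchVertex_mem_support_pathBetween hκ hG hab hk⟩

end KappaConnected

section BranchSets

variable {V ι : Type*} [LinearOrder ι] {G : SimpleGraph V} {v : ι → V}
  (p : ∀ i j, G.Walk (v i) (v j))

def branchSet (i : ι) : Set V := insert (v i) {z | ∃ j, i < j ∧ z ∈ (p i j).dropLast.support}

theorem connected_induce_branchSet (i : ι) : (G.induce (branchSet p i)).Connected := by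
  refine induce_connected_of_patches (v i) (mem_insert _ _) fun {z} hz => ?_
  rcases hz with rfl | ⟨j, hij, hz⟩
  · exact ⟨{v i}, singleton_subset_iff.mpr (mem_insert _ _), rfl, rfl, Reachable.refl _⟩
  · refine ⟨{z | z ∈ (p i j).dropLast.support}, ?_, Walk.start_mem_support _, hz,
      (p i j).dropLast.connected_induce_support.preconnected _ _⟩
    exact fun y hy => Or.inr ⟨j, hij, hy⟩

variable {p}

theorem exists_adj_branchSet (hv : Function.Injective v) {i j : ι} (hij : i < j) :
    ∃ x ∈ branchSet p i, ∃ y ∈ branchSet p j, G.Adj x y := by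
  have hnil : ¬(p i j).Nil := Walk.not_nil_of_ne (hv.ne hij.ne)
  refine ⟨_, Or.inr ⟨j, hij, ?_⟩, v j, mem_insert _ _, Walk.adj_penultimate hnil⟩
  exact (Walk.support_dropLast hnil).symm ▸ Walk.penultimate_mem_dropLast_support hnil

variable (hv : Function.Injective v) (hpath : ∀ i j, i ≠ j → (p i j).IsPath)
  (hends : ∀ i j k, i ≠ j → v k ∈ (p i j).support → k = i ∨ k = j)

include hv hpath hends in
theorem eq_of_mem_branchSet_of_mem_range {i : ι} {z : V} (hz : z ∈ branchSet p i)
    (hzv : z ∈ range v) : z = v i := by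
  obtain ⟨k, rfl⟩ := hzv
  rcases hz with hz | ⟨j, hij, hz⟩
  · exact hz
  obtain rfl | rfl := hends i j k hij.ne ((Walk.isSubwalk_rfl _).dropLast.support_subset hz)
  · rfl
  · exact absurd hz ((hpath i k hij.ne).end_notMem_support_dropLast (hv.ne hij.ne))

variable (hcross : ∀ i j k l, i ≠ j → k ≠ l → (i, j) ≠ (k, l) → (i, j) ≠ (l, k) →
  ∀ x, x ∈ (p i j).support → x ∈ (p k l).support → x ∈ range v)

include hcross in
theorem mem_range_of_mem_branchSet_of_mem_branchSet {i k : ι} (hik : i ≠ k) {z : V}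
    (hzi : z ∈ branchSet p i) (hzk : z ∈ branchSet p k) : z ∈ range v := by
  rcases hzi with rfl | ⟨j, hij, hzi⟩
  · exact mem_range_self i
  rcases hzk with rfl | ⟨l, hkl, hzk⟩
  · exact mem_range_self k
  refine hcross i j k l hij.ne hkl.ne (fun h => hik (Prod.ext_iff.mp h).1) (fun h => ?_) z
    ((Walk.isSubwalk_rfl _).dropLast.support_subset hzi)
    ((Walk.isSubwalk_rfl _).dropLast.support_subset hzk)
  obtain ⟨rfl, rfl⟩ := Prod.ext_iff.mp h
  exact lt_asymm hij hkl

include hv hpath hends hcross in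
theorem disjoint_branchSet {i k : ι} (hik : i ≠ k) : Disjoint (branchSet p i) (branchSet p k) :=
  disjoint_left.mpr fun _ hzi hzk =>
    have hz := mem_range_of_mem_branchSet_of_mem_branchSet hcross hik hzi hzk
    hik (hv ((eq_of_mem_branchSet_of_mem_range hv hpath hends hzi hz).symm.trans
      (eq_of_mem_branchSet_of_mem_range hv hpath hends hzk hz)))

end BranchSets

theorem ContainsSubdivisionOfComplete.hasCompleteMinor {V : Type u} {G : SimpleGraph V}
    {κ : Cardinal.{u}} (h : ContainsSubdivisionOfComplete G κ) : HasCompleteMinor G κ := by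
  obtain ⟨ι, v, hι, hv, p, hpath, hcross, hends⟩ := h
  let _ : LinearOrder ι := IsWellOrder.linearOrder WellOrderingRel
  refine ⟨ι, branchSet p, hι, fun i => ⟨v i, mem_insert _ _⟩,
    fun i k hik => disjoint_branchSet hv hpath hends hcross hik, connected_induce_branchSet p,
    fun i j hij => ?_⟩
  rcases hij.lt_or_gt with hij | hji
  · exact exists_adj_branchSet hv hij
  · obtain ⟨x, hx, y, hy, hxy⟩ := exists_adj_branchSet hv hji
    exact ⟨y, hy, x, hx, hxy.symm⟩

/-- a κ-connected graph (κ infinite) contains a subdivision of K_κ,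
in particular K_κ is a minor of it. -/
theorem stmt9 (κ : Cardinal.{u}) (hκ : ℵ₀ ≤ κ) {V : Type u} (G : SimpleGraph V)
    (hconn : KappaConnected G κ) :
    ContainsSubdivisionOfComplete G κ ∧ HasCompleteMinor G κ :=
  have h := hconn.containsSubdivisionOfComplete hκ
  ⟨h, h.hasCompleteMinor⟩
end

section
/- If T is a κ-Aronszajn tree (height κ, no κ-branch, all levels of size less than κ, with κ regular), then the comparability graph of T is (κ, κ)-connected and has no K_κ minor. -/
universe u

open Cardinal

section Helpers

variable {T : Type u} [PartialOrder T]

lemma below_total (hT : IsSetTree T) {t a b : T} (ha : a ≤ t) (hb : b ≤ t) :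
    a ≤ b ∨ b ≤ a := by
  rcases eq_or_lt_of_le ha with rfl | ha'
  · exact Or.inr hb
  rcases eq_or_lt_of_le hb with rfl | hb'
  · exact Or.inl ha'.le
  haveI := hT t
  rcases trichotomous_of (· < ·) (⟨a, ha'⟩ : {s : T // s < t}) ⟨b, hb'⟩ with h | h | h
  · exact Or.inl (le_of_lt (Subtype.mk_lt_mk.mp h))
  · exact Or.inl (le_of_eq (congrArg Subtype.val h))
  · exact Or.inr (le_of_lt (Subtype.mk_lt_mk.mp h))

lemma exists_min_below (hT : IsSetTree T) {t : T} {S : Set T} (hne : S.Nonempty)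
    (hb : ∀ s ∈ S, s ≤ t) : ∃ m ∈ S, ∀ s ∈ S, m ≤ s := by
  haveI := hT t
  set S' : Set {s : T // s < t} := {x | x.1 ∈ S} with hS'
  by_cases h : S'.Nonempty
  · obtain ⟨m, hmS, hmin⟩ := (hT t).wf.has_min S' h
    refine ⟨m.1, hmS, fun s hs => ?_⟩
    rcases eq_or_lt_of_le (hb s hs) with rfl | h'
    · exact m.2.le
    · rcases below_total hT (le_of_lt m.2) (le_of_lt h') with h2 | h2
      · exact h2
      · rcases eq_or_lt_of_le h2 with h3 | h3
        · exact le_of_eq h3.symm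
        · exact absurd (Subtype.mk_lt_mk.mpr h3 : (⟨s, h'⟩ : {s : T // s < t}) < m)
            (hmin ⟨s, h'⟩ hs)
  · obtain ⟨s0, hs0⟩ := hne
    have hs0t : s0 = t := by
      rcases eq_or_lt_of_le (hb s0 hs0) with h' | h'
      · exact h'
      · exact absurd ⟨⟨s0, h'⟩, hs0⟩ h
    refine ⟨s0, hs0, fun s hs => ?_⟩
    rcases eq_or_lt_of_le (hb s hs) with h' | h'
    · rw [hs0t, h']
    · exact absurd ⟨⟨s, h'⟩, hs⟩ h

lemma least_of_connected (hT : IsSetTree T) {U : Set T}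
    (hU : ((compGraph T).induce U).Connected) : ∃ m ∈ U, ∀ u ∈ U, m ≤ u := by
  obtain ⟨u0⟩ := hU.nonempty
  have key : ∀ (a v : ↥U), ((compGraph T).induce U).Reachable a v →
      ∃ c ∈ U, c ≤ a.1 ∧ c ≤ v.1 := by
    intro a v h
    obtain ⟨p⟩ := h
    induction p with
    | @nil x => exact ⟨x.1, x.2, le_refl _, le_refl _⟩
    | @cons a b v h q ih =>
      obtain ⟨c, hcU, hcb, hcv⟩ := ih
      have hadj : (compGraph T).Adj a.1 b.1 := by
        simpa using h
      rw [compGraph, SimpleGraph.fromRel_adj] at hadj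
      rcases hadj.2 with hab | hba
      · rcases below_total hT hcb hab with h2 | h2
        · exact ⟨c, hcU, h2, hcv⟩
        · exact ⟨a.1, a.2, le_refl _, le_trans h2 hcv⟩
      · exact ⟨c, hcU, le_trans hcb hba, hcv⟩
  obtain ⟨m, hm, hmin⟩ := exists_min_below hT (S := {c | c ∈ U ∧ c ≤ u0.1})
    ⟨u0.1, u0.2, le_refl _⟩ (fun s hs => hs.2)
  refine ⟨m, hm.1, fun u hu => ?_⟩
  obtain ⟨c, hcU, hc0, hcu⟩ := key u0 ⟨u, hu⟩ (hU.preconnected u0 ⟨u, hu⟩)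
  exact le_trans (hmin c ⟨hcU, hc0⟩) hcu

lemma height_eq_typein (hT : IsSetTree T) {s t : T} (h : s < t) :
    nodeHeight hT s = @Ordinal.typein {x : T // x < t} (· < ·) (hT t) ⟨s, h⟩ := by
  haveI := hT t
  haveI := hT s
  rw [← Ordinal.type_subrel]
  refine Ordinal.type_eq.mpr ⟨RelIso.ofSurjective
    (RelEmbedding.ofMonotone
      (fun x => ⟨⟨x.1, lt_trans x.2 h⟩, show (⟨x.1, lt_trans x.2 h⟩ : {x : T // x < t}) < ⟨s, h⟩
        from Subtype.mk_lt_mk.mpr x.2⟩) ?_) ?_⟩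
  · intro a b hab
    show (⟨a.1, _⟩ : {x : T // x < t}) < ⟨b.1, _⟩
    exact Subtype.mk_lt_mk.mpr (Subtype.coe_lt_coe.mpr hab)
  · rintro ⟨⟨y, hyt⟩, hys⟩
    have hys' : y < s := Subtype.mk_lt_mk.mp hys
    exact ⟨⟨y, hys'⟩, rfl⟩

lemma exists_below_at (hT : IsSetTree T) {t : T} {o : Ordinal.{u}}
    (h : o < nodeHeight hT t) : ∃ r, r < t ∧ nodeHeight hT r = o := by
  haveI := hT t
  let r := Ordinal.enum ((· < ·) : {x : T // x < t} → {x : T // x < t} → Prop) ⟨o, h⟩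
  refine ⟨r.1, r.2, ?_⟩
  rw [height_eq_typein hT r.2]
  exact Ordinal.typein_enum _ _

lemma kappa_le_card (κ : Cardinal.{u}) (hT : IsSetTree T)
    (hlev : ∀ o : Ordinal.{u}, o < κ.ord → ∃ t : T, nodeHeight hT t = o) :
    κ ≤ #T := by
  letI inst : IsWellOrder κ.ord.ToType (· < ·) := isWellOrder_lt
  have hf : ∀ a : κ.ord.ToType, ∃ t : T,
      nodeHeight hT t = @Ordinal.typein κ.ord.ToType (· < ·) inst a :=
    fun a => hlev _ (Ordinal.typein_lt_self a)
  choose f hfspec using hf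
  have hfinj : Function.Injective f := by
    intro a b hab
    have h2 : @Ordinal.typein κ.ord.ToType (· < ·) inst a
        = @Ordinal.typein κ.ord.ToType (· < ·) inst b := by
      rw [← hfspec a, ← hfspec b, hab]
    exact Ordinal.typein_injective _ h2
  calc κ = (κ.ord).card := (Cardinal.card_ord κ).symm
    _ = #κ.ord.ToType := (Cardinal.mk_toType _).symm
    _ ≤ #T := Cardinal.mk_le_of_injective hfinj

end Helpers

section Main

variable {T : Type u} [PartialOrder T]

lemma no_complete_minor (κ : Cardinal.{u}) (hT : IsSetTree T)
    (hbr : ¬ HasChainOfSize T κ) : ¬ HasCompleteMinor (compGraph T) κ := by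
  rintro ⟨ι, U, hcard, hne, hdisj, hconn, hadj⟩
  have hm : ∀ i, ∃ m ∈ U i, ∀ u ∈ U i, m ≤ u := fun i => least_of_connected hT (hconn i)
  choose m hmU hmle using hm
  have hinj : Function.Injective m := by
    intro i j hij
    by_contra hne'
    exact (Set.disjoint_left.mp (hdisj i j hne')) (hmU i) (by rw [hij]; exact hmU j)
  have hcomp : ∀ i j, i ≠ j → m i ≤ m j ∨ m j ≤ m i := by
    intro i j hij
    obtain ⟨x, hx, y, hy, hxy⟩ := hadj i j hij
    rw [compGraph, SimpleGraph.fromRel_adj] at hxy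
    rcases hxy.2 with h | h
    · exact below_total hT (le_trans (hmle i x hx) h) (hmle j y hy)
    · exact below_total hT (hmle i x hx) (le_trans (hmle j y hy) h)
  apply hbr
  refine ⟨Set.range m, ?_, ?_⟩
  · rintro _ ⟨i, rfl⟩ _ ⟨j, rfl⟩ hne'
    exact hcomp i j (fun h => hne' (by rw [h]))
  · rw [Cardinal.mk_range_eq _ hinj, hcard]

end Main

/-- the comparability graph of a κ-Aronszajn tree (κ regular) is
(κ,κ)-connected and has no K_κ minor. -/
theorem stmt11 (κ : Cardinal.{u}) (hreg : κ.IsRegular)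
    (T : Type u) [PartialOrder T] (hT : IsSetTree T)
    (hht : ∀ t : T, nodeHeight hT t < κ.ord)
    (hlev : ∀ o : Ordinal.{u}, o < κ.ord → ∃ t : T, nodeHeight hT t = o)
    (hbr : ¬ HasChainOfSize T κ)
    (hwidth : ∀ o : Ordinal.{u}, #{t : T | nodeHeight hT t = o} < κ) :
    KappaLambdaConnected (compGraph T) κ κ ∧ ¬ HasCompleteMinor (compGraph T) κ := by
  constructor
  · intro S hS
    have hκT : κ ≤ #T := kappa_le_card κ hT hlev
    have hcne : (Sᶜ : Set T).Nonempty := by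
      rw [Set.nonempty_compl]
      intro h
      rw [h, Cardinal.mk_univ] at hS
      exact absurd hκT (not_le.mpr hS)
    refine ⟨hcne, ?_⟩
    set α := ⨆ s : S, (Order.succ (nodeHeight hT s.1)) with hαdef
    have hbdd : BddAbove (Set.range fun s : S => Order.succ (nodeHeight hT s.1)) :=
      ⟨κ.ord, by rintro _ ⟨s, rfl⟩; exact ((Cardinal.isSuccLimit_ord hreg.1).succ_lt (hht _)).le⟩
    have hαlt : α < κ.ord :=
      Cardinal.iSup_lt_ord_of_isRegular hreg hS
        (fun s => (Cardinal.isSuccLimit_ord hreg.1).succ_lt (hht _))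
    have hSlt : ∀ s ∈ S, nodeHeight hT s < α := fun s hs =>
      lt_of_lt_of_le (Order.lt_succ _) (le_ciSup hbdd ⟨s, hs⟩)
    have hLow : #{t : T | nodeHeight hT t ≤ α} < κ := by
      letI inst : IsWellOrder (Order.succ α).ToType (· < ·) := isWellOrder_lt
      have hsub : {t : T | nodeHeight hT t ≤ α} ⊆
          ⋃ b : (Order.succ α).ToType,
            {t : T | nodeHeight hT t = @Ordinal.typein _ (· < ·) inst b} := by
        intro t ht
        have h2 : nodeHeight hT t <
            Ordinal.type ((· < ·) : (Order.succ α).ToType → (Order.succ α).ToType → Prop) := by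
          rw [Ordinal.type_toType]
          exact Order.lt_succ_iff.mpr ht
        obtain ⟨b, hb⟩ := Ordinal.typein_surj _ h2
        exact Set.mem_iUnion.mpr ⟨b, hb.symm⟩
      refine lt_of_le_of_lt (Cardinal.mk_le_mk_of_subset hsub) ?_
      refine lt_of_le_of_lt (Cardinal.mk_iUnion_le _) ?_
      have hcard1 : #(Order.succ α).ToType < κ := by
        rw [Cardinal.mk_toType]
        exact Cardinal.lt_ord.mp ((Cardinal.isSuccLimit_ord hreg.1).succ_lt hαlt)
      exact Cardinal.mul_lt_of_lt hreg.1 hcard1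
        (Cardinal.iSup_lt_of_isRegular hreg hcard1 (fun b => hwidth _))
    have hg : ∀ v : ↥(Sᶜ : Set T), ∃ w : ↥(Sᶜ : Set T),
        ((compGraph T).induce (Sᶜ : Set T)).Reachable v w ∧ nodeHeight hT w.1 ≤ α := by
      intro v
      by_cases h : nodeHeight hT v.1 ≤ α
      · exact ⟨v, SimpleGraph.Reachable.refl v, h⟩
      · push_neg at h
        obtain ⟨r, hrv, hr⟩ := exists_below_at hT h
        have hrS : r ∈ (Sᶜ : Set T) := by
          intro hrS'
          exact absurd (hSlt r hrS') (by rw [hr]; exact lt_irrefl α)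
        refine ⟨⟨r, hrS⟩, SimpleGraph.Adj.reachable ?_, le_of_eq hr⟩
        show ((compGraph T).induce (Sᶜ : Set T)).Adj v ⟨r, hrS⟩
        rw [SimpleGraph.comap_adj]
        show (compGraph T).Adj v.1 r
        rw [compGraph, SimpleGraph.fromRel_adj]
        exact ⟨(ne_of_lt hrv).symm, Or.inr hrv.le⟩
    choose g hg1 hg2 using hg
    have hle : #((compGraph T).induce (Sᶜ : Set T)).ConnectedComponent
        ≤ #{t : T | nodeHeight hT t ≤ α} := by
      refine Cardinal.mk_le_of_injective
        (f := fun C => (⟨(g (Quot.out C)).1, hg2 (Quot.out C)⟩ :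
          {t : T | nodeHeight hT t ≤ α})) ?_
      intro C1 C2 h12
      have hval : g (Quot.out C1) = g (Quot.out C2) := by
        have h12' := h12
        simp only [Subtype.mk.injEq] at h12'
        exact Subtype.ext h12'
      have e1 : C1 = SimpleGraph.connectedComponentMk _ (g (Quot.out C1)) := by
        conv_lhs => rw [← Quot.out_eq C1]
        exact SimpleGraph.ConnectedComponent.sound (hg1 _)
      have e2 : C2 = SimpleGraph.connectedComponentMk _ (g (Quot.out C2)) := by
        conv_lhs => rw [← Quot.out_eq C2]
        exact SimpleGraph.ConnectedComponent.sound (hg1 _)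
      rw [e1, e2, hval]
    exact lt_of_le_of_lt hle hLow
  · exact no_complete_minor κ hT hbr
end

section
/- Let κ be a regular cardinal and T a tree of height κ. If the comparability graph of T is (κ, κ)-connected and has no K_κ minor, then T is a κ-Aronszajn tree: T has no κ-branch and all levels of T have size less than κ. -/
universe u

open Cardinal

section Aux

variable {T : Type u} [PartialOrder T]

theorem nodeHeight_eq_typein (hT : IsSetTree T) {s x : T} (h : s < x) :
    nodeHeight hT s = @Ordinal.typein {r : T // r < x} (· < ·) (hT x) ⟨s, h⟩ := by
  haveI := hT x
  haveI := hT s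
  rw [← Ordinal.type_subrel]
  let e : {r : T // r < s} ≃ ↥{b : {r : T // r < x} | b < ⟨s, h⟩} :=
    { toFun := fun r => ⟨⟨r.1, r.2.trans h⟩, (r.2 : r.1 < s)⟩
      invFun := fun b => ⟨b.1.1, (b.2 : b.1.1 < s)⟩
      left_inv := fun r => rfl
      right_inv := fun b => rfl }
  exact Ordinal.type_eq.2 ⟨RelIso.mk e fun {a b} => Iff.rfl⟩

theorem nodeHeight_lt (hT : IsSetTree T) {s x : T} (h : s < x) :
    nodeHeight hT s < nodeHeight hT x := by
  haveI := hT x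
  rw [nodeHeight_eq_typein hT h]
  exact Ordinal.typein_lt_type _ _

theorem preds_comparable (hT : IsSetTree T) {r s x : T} (hr : r < x) (hs : s < x) :
    r < s ∨ r = s ∨ s < r := by
  haveI := hT x
  rcases trichotomous_of (α := {t : T // t < x}) (· < ·) ⟨r, hr⟩ ⟨s, hs⟩ with h | h | h
  · exact Or.inl (Subtype.mk_lt_mk.1 h)
  · exact Or.inr (Or.inl (congrArg Subtype.val h))
  · exact Or.inr (Or.inr (Subtype.mk_lt_mk.1 h))

theorem exists_pred (hT : IsSetTree T) {x : T} {o : Ordinal.{u}} (h : o ≤ nodeHeight hT x) :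
    ∃ s, s ≤ x ∧ nodeHeight hT s = o := by
  rcases eq_or_lt_of_le h with h' | h'
  · exact ⟨x, le_rfl, h'.symm⟩
  · haveI := hT x
    have h'' : o < Ordinal.type ((· < ·) : {r : T // r < x} → {r : T // r < x} → Prop) := h'
    obtain ⟨s, hs⟩ := Ordinal.typein_surj (α := {r : T // r < x}) (· < ·) h''
    refine ⟨s.1, le_of_lt s.2, ?_⟩
    rw [nodeHeight_eq_typein hT s.2]
    exact hs

theorem unique_pred (hT : IsSetTree T) {x s s' : T} (hs : s ≤ x) (hs' : s' ≤ x)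
    (h : nodeHeight hT s = nodeHeight hT s') : s = s' := by
  rcases hs.lt_or_eq with h1 | rfl
  · rcases hs'.lt_or_eq with h2 | rfl
    · rcases preds_comparable hT h1 h2 with h3 | h3 | h3
      · exact absurd h (ne_of_lt (nodeHeight_lt hT h3))
      · exact h3
      · exact absurd h.symm (ne_of_lt (nodeHeight_lt hT h3))
    · exact absurd h (ne_of_lt (nodeHeight_lt hT h1))
  · rcases hs'.lt_or_eq with h2 | h2
    · exact absurd h.symm (ne_of_lt (nodeHeight_lt hT h2))
    · exact h2.symm

end Aux

/-- if κ is regular, T a tree of height κ and its comparability graph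
is (κ,κ)-connected with no K_κ minor, then T is κ-Aronszajn: no κ-branch and all
levels of size < κ. -/
theorem stmt12 (κ : Cardinal.{u}) (hreg : κ.IsRegular)
    (T : Type u) [PartialOrder T] (hT : IsSetTree T)
    (hht : ∀ t : T, nodeHeight hT t < κ.ord)
    (hlev : ∀ o : Ordinal.{u}, o < κ.ord → ∃ t : T, nodeHeight hT t = o)
    (hconn : KappaLambdaConnected (compGraph T) κ κ)
    (hminor : ¬ HasCompleteMinor (compGraph T) κ) :
    ¬ HasChainOfSize T κ ∧ ∀ o : Ordinal.{u}, #{t : T | nodeHeight hT t = o} < κ := by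
  constructor
  · rintro ⟨C, hC, hCcard⟩
    apply hminor
    refine ⟨C, fun i => {i.1}, hCcard, fun i => ⟨i.1, rfl⟩, ?_, ?_, ?_⟩
    · intro i j hij
      exact Set.disjoint_singleton.2 fun h => hij (Subtype.ext h)
    · intro i
      rw [SimpleGraph.connected_iff]
      refine ⟨fun x y => ?_, ⟨⟨i.1, rfl⟩⟩⟩
      have hxy : x = y := Subtype.ext (x.2.trans y.2.symm)
      cases hxy
      exact SimpleGraph.Reachable.refl x
    · intro i j hij
      refine ⟨i.1, rfl, j.1, rfl, ?_⟩
      have hne : (i : T) ≠ j := fun h => hij (Subtype.ext h)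
      exact (SimpleGraph.fromRel_adj _ _ _).2 ⟨hne, hC i.2 j.2 hne⟩
  · by_contra hcon
    push_neg at hcon
    obtain ⟨o₀, ho₀⟩ := hcon
    obtain ⟨o, hoP, homin⟩ := Ordinal.lt_wf.has_min
      {o : Ordinal.{u} | κ ≤ #{t : T | nodeHeight hT t = o}} ⟨o₀, ho₀⟩
    have hoP : κ ≤ #{t : T | nodeHeight hT t = o} := hoP
    have hpos : (0 : Cardinal.{u}) < κ := aleph0_pos.trans_le hreg.aleph0_le
    obtain ⟨t0, ht0⟩ : ∃ t : T, nodeHeight hT t = o := by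
      by_contra h
      push_neg at h
      have he : {t : T | nodeHeight hT t = o} = ∅ := Set.eq_empty_iff_forall_notMem.2 h
      rw [he, Cardinal.mk_emptyCollection] at hoP
      exact hpos.not_ge hoP
    have ho : o < κ.ord := ht0 ▸ hht t0
    set S : Set T := {t : T | nodeHeight hT t < o} with hSdef
    have hSunion : S = ⋃ i : o.ToType, {t : T | nodeHeight hT t = @Ordinal.typein o.ToType (· < ·) isWellOrder_lt i} := by
      ext t
      simp only [hSdef, Set.mem_setOf_eq, Set.mem_iUnion]
      constructor
      · intro h
        obtain ⟨i, hi⟩ := @Ordinal.typein_surj o.ToType (· < ·) isWellOrder_lt _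
          (by rw [Ordinal.type_toType]; exact h)
        exact ⟨i, hi.symm⟩
      · rintro ⟨i, hi⟩
        rw [hi]
        exact Ordinal.typein_lt_self i
    have hS : #S < κ := by
      rw [hSunion]
      rw [Cardinal.card_iUnion_lt_iff_forall_of_isRegular hreg
        (by rw [Cardinal.mk_toType]; exact Cardinal.lt_ord.1 ho)]
      intro i
      by_contra h
      push_neg at h
      exact homin _ h (Ordinal.typein_lt_self i)
    obtain ⟨-, hcomp⟩ := hconn S hS
    have hmemc : ∀ x : ↥(Sᶜ), o ≤ nodeHeight hT x.1 := fun x => not_lt.1 x.2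
    choose F hF1 hF2 using fun x : ↥(Sᶜ) => exists_pred hT (hmemc x)
    have hadj : ∀ x y : ↥(Sᶜ), ((compGraph T).induce Sᶜ).Adj x y → F x = F y := by
      intro x y h
      have h' : (compGraph T).Adj x.1 y.1 := h
      rw [compGraph, SimpleGraph.fromRel_adj] at h'
      obtain ⟨hne, hle | hle⟩ := h'
      · exact unique_pred hT ((hF1 x).trans hle) (hF1 y) ((hF2 x).trans (hF2 y).symm)
      · exact unique_pred hT (hF1 x) ((hF1 y).trans hle) ((hF2 x).trans (hF2 y).symm)
    have hwalk : ∀ (x y : ↥(Sᶜ)) (p : ((compGraph T).induce Sᶜ).Walk x y), F x = F y := by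
      intro x y p
      induction p with
      | nil => rfl
      | cons h p ih => exact (hadj _ _ h).trans ih
    have hmem : ∀ t : ↥{t : T | nodeHeight hT t = o}, t.1 ∈ Sᶜ :=
      fun t => not_lt.2 (ge_of_eq t.2)
    have hFt : ∀ t : ↥{t : T | nodeHeight hT t = o}, F ⟨t.1, hmem t⟩ = t.1 := by
      intro t
      exact unique_pred hT (hF1 ⟨t.1, hmem t⟩) le_rfl ((hF2 ⟨t.1, hmem t⟩).trans t.2.symm)
    have hinj : Function.Injective (fun t : ↥{t : T | nodeHeight hT t = o} =>
        ((compGraph T).induce Sᶜ).connectedComponentMk ⟨t.1, hmem t⟩) := by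
      intro t t' h
      obtain ⟨p⟩ := SimpleGraph.ConnectedComponent.exact h
      have := hwalk _ _ p
      rw [hFt t, hFt t'] at this
      exact Subtype.ext this
    exact absurd (le_trans hoP (Cardinal.mk_le_of_injective hinj)) (not_le.2 hcomp)
end

section
/- Suppose κ and λ are regular cardinals with λ < κ. Every tree of height κ all of whose levels have size less than λ has a chain of size κ (a cofinal branch). -/
universe u

open Cardinal

/-!
Call a node *tall* if it has extensions of every height below `κ`. As `κ` is regular and levels
have fewer than `κ` elements, every level contains a tall node and a tall node has tall extensions
on every higher level. Without a chain of size `κ`, the tall extensions of a tall node do not form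
a chain, so every tall node has two incomparable tall extensions; since levels are small, for the
tall nodes of level `β` these can be found below a common height `next β < κ`. Iterating `next`
along `λ` gives levels `γ_ξ` (`ξ < λ`) with supremum `Γ < κ`. Fix a tall node `z` on level `Γ`.
For each `ξ`, one of the two extensions of the predecessor of `z` on level `γ_ξ` leaves the
branch below `z` before level `γ_(ξ+1)`; extended to level `Γ`, these give `λ` distinct nodes
on level `Γ`, contradicting `|T_Γ| < λ`.
-/

namespace Ordinal

noncomputable def tower (f : Ordinal.{u} → Ordinal.{u}) (ξ : Ordinal.{u}) : Ordinal.{u} :=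
  ⨆ η : Set.Iio ξ, f (tower f η)
termination_by ξ
decreasing_by exact η.2

theorem map_tower_le_tower (f : Ordinal.{u} → Ordinal.{u}) {η ξ : Ordinal.{u}} (h : η < ξ) :
    f (tower f η) ≤ tower f ξ := by
  rw [tower.eq_1 f ξ]
  exact Ordinal.le_iSup (fun η : Set.Iio ξ => f (tower f η)) ⟨η, h⟩

theorem tower_lt_ord {f : Ordinal.{u} → Ordinal.{u}} {κ : Cardinal.{u}} (hκ : κ.IsRegular)
    (hf : ∀ β < κ.ord, f β < κ.ord) {ξ : Ordinal.{u}} (hξ : ξ.card < κ) : tower f ξ < κ.ord := by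
  induction ξ using WellFoundedLT.induction with
  | _ ξ ih =>
    rw [tower.eq_1]
    refine Ordinal.lift_iSup_lt_of_lt_cof ?_ fun η => hf _ (ih η η.2 ?_)
    · rw [← Ordinal.lift_cof, hκ.cof_ord, Cardinal.mk_Iio_ordinal]
      simpa only [Cardinal.lift_lift, Cardinal.lift_lt] using hξ
    · exact (Ordinal.card_le_card η.2.le).trans_lt hξ

end Ordinal

namespace IsSetTree

variable {T : Type u} [PartialOrder T]

theorem nodeHeight_eq_typein (hT : IsSetTree T) {t : T} (s : {s : T // s < t}) :
    nodeHeight hT s.1 = @Ordinal.typein _ (· < ·) (hT t) s := by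
  have := hT t
  have := hT s.1
  rw [← Ordinal.type_subrel]
  have : IsWellOrder {b : {s : T // s < t} // b ∈ {b | b < s}} (Subrel (· < ·) {b | b < s}) :=
    (Subrel.relEmbedding _ _).isWellOrder
  exact RelIso.ordinalType_congr
    { toFun := fun r => ⟨⟨r.1, r.2.trans s.2⟩, Subtype.coe_lt_coe.mp r.2⟩
      invFun := fun b => ⟨b.1.1, b.2⟩
      left_inv := fun _ => rfl
      right_inv := fun _ => rfl
      map_rel_iff' := Iff.rfl }

theorem nodeHeight_lt_nodeHeight (hT : IsSetTree T) {s t : T} (h : s < t) :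
    nodeHeight hT s < nodeHeight hT t := by
  have := hT t
  rw [hT.nodeHeight_eq_typein ⟨s, h⟩]
  exact Ordinal.typein_lt_type _ _

theorem le_total_of_le_s13 (hT : IsSetTree T) {s₁ s₂ t : T} (h₁ : s₁ ≤ t) (h₂ : s₂ ≤ t) :
    s₁ ≤ s₂ ∨ s₂ ≤ s₁ := by
  rcases h₁.eq_or_lt with rfl | h₁
  · exact Or.inr h₂
  rcases h₂.eq_or_lt with rfl | h₂
  · exact Or.inl h₁.le
  have := hT t
  rcases trichotomous_of (· < ·) (⟨s₁, h₁⟩ : {s : T // s < t}) ⟨s₂, h₂⟩ with h | h | h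
  · exact Or.inl (Subtype.mk_lt_mk.mp h).le
  · exact Or.inl (congrArg Subtype.val h).le
  · exact Or.inr (Subtype.mk_lt_mk.mp h).le

theorem le_of_le_of_nodeHeight_le (hT : IsSetTree T) {x s y : T} (hx : x ≤ y) (hs : s ≤ y)
    (h : nodeHeight hT x ≤ nodeHeight hT s) : x ≤ s := by
  rcases hT.le_total_of_le_s13 hx hs with hxs | hsx
  · exact hxs
  rcases hsx.eq_or_lt with rfl | hsx
  · exact le_rfl
  · exact absurd h (hT.nodeHeight_lt_nodeHeight hsx).not_ge

theorem exists_le_nodeHeight_eq (hT : IsSetTree T) {t : T} {o : Ordinal.{u}}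
    (h : o ≤ nodeHeight hT t) : ∃ s, s ≤ t ∧ nodeHeight hT s = o := by
  rcases h.eq_or_lt with rfl | h
  · exact ⟨t, le_rfl, rfl⟩
  have := hT t
  obtain ⟨s, hs⟩ := Ordinal.typein_surj (α := {s : T // s < t}) (· < ·) h
  exact ⟨s.1, s.2.le, (hT.nodeHeight_eq_typein s).trans hs⟩

def IsTall (hT : IsSetTree T) (κ : Cardinal.{u}) (x : T) : Prop :=
  ∀ β < κ.ord, ∃ y, x ≤ y ∧ β ≤ nodeHeight hT y

variable {hT : IsSetTree T} {κ : Cardinal.{u}}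

theorem IsTall.of_le {x z : T} (hz : IsTall hT κ z) (hxz : x ≤ z) : IsTall hT κ x :=
  fun β hβ => (hz β hβ).imp fun _ hy => ⟨hxz.trans hy.1, hy.2⟩

theorem IsTall.exists_le_nodeHeight_eq {x : T} (hx : IsTall hT κ x) {β : Ordinal.{u}}
    (hxβ : nodeHeight hT x ≤ β) (hβ : β < κ.ord) : ∃ y, x ≤ y ∧ nodeHeight hT y = β := by
  obtain ⟨t, hxt, hβt⟩ := hx β hβ
  obtain ⟨y, hyt, hy⟩ := hT.exists_le_nodeHeight_eq hβt
  exact ⟨y, hT.le_of_le_of_nodeHeight_le hxt hyt (hy ▸ hxβ), hy⟩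

theorem exists_isTall_mem (hκ : κ.IsRegular) (S : Set T) (hS : #S < κ)
    (hcofinal : ∀ β < κ.ord, ∃ y ∈ S, ∃ t, y ≤ t ∧ β ≤ nodeHeight hT t) :
    ∃ y ∈ S, IsTall hT κ y := by
  by_contra! hshort
  simp only [IsTall, not_forall, not_exists, not_and, not_le] at hshort
  choose bound hbound_lt hbound using fun y : S => hshort y.1 y.2
  have hsup : ⨆ y, bound y < κ.ord :=
    Ordinal.iSup_lt_of_lt_cof (by rwa [hκ.cof_ord]) hbound_lt
  obtain ⟨y, hyS, t, hyt, ht⟩ := hcofinal _ hsup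
  exact (hbound ⟨y, hyS⟩ t hyt).not_ge ((Ordinal.le_iSup bound _).trans ht)

theorem exists_isTall_nodeHeight_eq (hκ : κ.IsRegular)
    (hlev : ∀ o < κ.ord, ∃ t : T, nodeHeight hT t = o)
    (hwidth : ∀ o, #{t : T | nodeHeight hT t = o} < κ) {β : Ordinal.{u}} (hβ : β < κ.ord) :
    ∃ y, nodeHeight hT y = β ∧ IsTall hT κ y := by
  refine exists_isTall_mem hκ _ (hwidth β) fun γ hγ => ?_
  obtain ⟨t, ht⟩ := hlev (max β γ) (max_lt hβ hγ)
  obtain ⟨s, hst, hs⟩ := hT.exists_le_nodeHeight_eq (ht ▸ le_max_left β γ)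
  exact ⟨s, hs, t, hst, ht ▸ le_max_right β γ⟩

theorem IsTall.exists_isTall_le_nodeHeight_eq (hκ : κ.IsRegular)
    (hwidth : ∀ o, #{t : T | nodeHeight hT t = o} < κ) {x : T} (hx : IsTall hT κ x)
    {β : Ordinal.{u}} (hxβ : nodeHeight hT x ≤ β) (hβ : β < κ.ord) :
    ∃ y, x ≤ y ∧ nodeHeight hT y = β ∧ IsTall hT κ y := by
  have hS : #{t : T | x ≤ t ∧ nodeHeight hT t = β} < κ :=
    (Cardinal.mk_le_mk_of_subset fun _ ht => ht.2).trans_lt (hwidth β)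
  obtain ⟨y, ⟨hxy, hy⟩, htall⟩ := exists_isTall_mem hκ _ hS fun γ hγ => by
    obtain ⟨t, hxt, ht⟩ := hx (max β γ) (max_lt hβ hγ)
    obtain ⟨s, hst, hs⟩ := hT.exists_le_nodeHeight_eq ((le_max_left β γ).trans ht)
    exact ⟨s, ⟨hT.le_of_le_of_nodeHeight_le hxt hst (hs ▸ hxβ), hs⟩, t, hst,
      (le_max_right β γ).trans ht⟩
  exact ⟨y, hxy, hy, htall⟩

theorem hasChainOfSize_of_isChain (hκ : κ.IsRegular) (hht : ∀ t : T, nodeHeight hT t < κ.ord)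
    {C : Set T} (hC : IsChain (· ≤ ·) C)
    (hcofinal : ∀ β < κ.ord, ∃ y ∈ C, β ≤ nodeHeight hT y) :
    HasChainOfSize T κ := by
  have hκC : κ ≤ #C := by
    by_contra! hC_small
    have hsup : ⨆ y : C, nodeHeight hT y + 1 < κ.ord :=
      Ordinal.iSup_add_one_lt_of_lt_cof (by rwa [hκ.cof_ord]) fun y => hht y
    obtain ⟨y, hyC, hy⟩ := hcofinal _ hsup
    exact hy.not_gt (Ordinal.lt_iSup_add_one (fun y : C => nodeHeight hT y) ⟨y, hyC⟩)
  obtain ⟨D, hDC, hD⟩ := Cardinal.le_mk_iff_exists_subset.mp hκC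
  exact ⟨D, hC.mono hDC, hD⟩

def SplitsBelow (hT : IsSetTree T) (κ : Cardinal.{u}) (x : T) (γ : Ordinal.{u}) : Prop :=
  ∃ u v, x ≤ u ∧ x ≤ v ∧ IsTall hT κ u ∧ IsTall hT κ v ∧ ¬ u ≤ v ∧ ¬ v ≤ u ∧
    nodeHeight hT u < γ ∧ nodeHeight hT v < γ

theorem SplitsBelow.mono {x : T} {γ γ' : Ordinal.{u}} (h : SplitsBelow hT κ x γ) (hγ : γ ≤ γ') :
    SplitsBelow hT κ x γ' :=
  let ⟨u, v, hxu, hxv, hu, hv, huv, hvu, hut, hvt⟩ := h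
  ⟨u, v, hxu, hxv, hu, hv, huv, hvu, hut.trans_le hγ, hvt.trans_le hγ⟩

/-- Of two incomparable nodes at most one lies below `z`. -/
theorem SplitsBelow.exists_not_le {x : T} {γ : Ordinal.{u}} (h : SplitsBelow hT κ x γ) (z : T) :
    ∃ e, x ≤ e ∧ IsTall hT κ e ∧ nodeHeight hT e < γ ∧ ¬ e ≤ z := by
  obtain ⟨u, v, hxu, hxv, hu, hv, huv, hvu, hut, hvt⟩ := h
  by_cases huz : u ≤ z
  · refine ⟨v, hxv, hv, hvt, fun hvz => ?_⟩
    exact (hT.le_total_of_le_s13 huz hvz).elim huv hvu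
  · exact ⟨u, hxu, hu, hut, huz⟩

theorem IsTall.exists_splitsBelow (hκ : κ.IsRegular) (hht : ∀ t : T, nodeHeight hT t < κ.ord)
    (hwidth : ∀ o, #{t : T | nodeHeight hT t = o} < κ) (hnc : ¬ HasChainOfSize T κ) {x : T}
    (hx : IsTall hT κ x) : ∃ γ < κ.ord, SplitsBelow hT κ x γ := by
  by_contra! hsplit
  have hchain : IsChain (· ≤ ·) {y | x ≤ y ∧ IsTall hT κ y} := by
    intro u ⟨hxu, hu⟩ v ⟨hxv, hv⟩ _
    by_contra! hincomp
    let γ := Order.succ (max (nodeHeight hT u) (nodeHeight hT v))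
    have hγ : γ < κ.ord := (Cardinal.isSuccLimit_ord hκ.aleph0_le).succ_lt (max_lt (hht u) (hht v))
    exact hsplit γ hγ ⟨u, v, hxu, hxv, hu, hv, hincomp.1, hincomp.2,
      Order.lt_succ_of_le (le_max_left _ _), Order.lt_succ_of_le (le_max_right _ _)⟩
  refine hnc (hasChainOfSize_of_isChain hκ hht hchain fun β hβ => ?_)
  obtain ⟨y, hxy, hy, hytall⟩ := hx.exists_isTall_le_nodeHeight_eq hκ hwidth
    (le_max_left _ β) (max_lt (hht x) hβ)
  exact ⟨y, ⟨hxy, hytall⟩, hy ▸ le_max_right _ _⟩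

theorem exists_levelwise_bound (hκ : κ.IsRegular)
    (hwidth : ∀ o, #{t : T | nodeHeight hT t = o} < κ) (F : T → Ordinal.{u})
    (hF : ∀ t, F t < κ.ord) :
    ∃ next : Ordinal.{u} → Ordinal.{u}, (∀ β, β < next β) ∧ (∀ β < κ.ord, next β < κ.ord) ∧
      ∀ t, F t < next (nodeHeight hT t) := by
  refine ⟨fun β => Order.succ (max β (⨆ t : {t | nodeHeight hT t = β}, F t)),
    fun β => Order.lt_succ_of_le (le_max_left _ _), fun β hβ => ?_, fun t => ?_⟩
  · refine (Cardinal.isSuccLimit_ord hκ.aleph0_le).succ_lt (max_lt hβ ?_)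
    exact Ordinal.iSup_lt_of_lt_cof (by rw [hκ.cof_ord]; exact hwidth β) fun t => hF t
  · have := Ordinal.le_iSup (fun s : {s | nodeHeight hT s = nodeHeight hT t} => F s) ⟨t, rfl⟩
    exact Order.lt_succ_of_le (this.trans (le_max_right _ _))

theorem exists_splitsBelow_bound (hκ : κ.IsRegular) (hht : ∀ t : T, nodeHeight hT t < κ.ord)
    (hwidth : ∀ o, #{t : T | nodeHeight hT t = o} < κ) (hnc : ¬ HasChainOfSize T κ) :
    ∃ next : Ordinal.{u} → Ordinal.{u}, (∀ β, β < next β) ∧ (∀ β < κ.ord, next β < κ.ord) ∧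
      ∀ x, IsTall hT κ x → SplitsBelow hT κ x (next (nodeHeight hT x)) := by
  have : ∀ t, ∃ γ < κ.ord, IsTall hT κ t → SplitsBelow hT κ t γ := fun t => by
    by_cases ht : IsTall hT κ t
    · obtain ⟨γ, hγ, hsplit⟩ := ht.exists_splitsBelow hκ hht hwidth hnc
      exact ⟨γ, hγ, fun _ => hsplit⟩
    · exact ⟨0, hκ.ord_pos, fun h => absurd h ht⟩
  choose F hF hsplit using this
  obtain ⟨next, hnext, hnext_lt, hbound⟩ := exists_levelwise_bound hκ hwidth F hF
  exact ⟨next, hnext, hnext_lt, fun x hx => (hsplit x hx).mono (hbound x).le⟩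

open Ordinal in
theorem card_le_mk_level_tower {next : Ordinal.{u} → Ordinal.{u}} (hnext : ∀ β, β < next β)
    (hsplit : ∀ x, IsTall hT κ x → SplitsBelow hT κ x (next (nodeHeight hT x)))
    {o : Ordinal.{u}} (hΓ : tower next o < κ.ord) {z : T} (hz : IsTall hT κ z)
    (hzΓ : nodeHeight hT z = tower next o) :
    o.card ≤ #{t : T | nodeHeight hT t = tower next o} := by
  have hbranch : ∀ ξ : Set.Iio o, ∃ p e w, p ≤ z ∧ nodeHeight hT p = tower next ξ ∧ p ≤ e ∧
      ¬ e ≤ z ∧ nodeHeight hT e < next (tower next ξ) ∧ e ≤ w ∧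
      nodeHeight hT w = tower next o := by
    intro ξ
    have hle : next (tower next ξ) ≤ tower next o := map_tower_le_tower next ξ.2
    obtain ⟨p, hpz, hp⟩ := hT.exists_le_nodeHeight_eq (hzΓ ▸ (hnext _).le.trans hle)
    obtain ⟨e, hpe, he, he_lt, hez⟩ := (hsplit p (hz.of_le hpz)).exists_not_le z
    rw [hp] at he_lt
    obtain ⟨w, hew, hw⟩ := he.exists_le_nodeHeight_eq (he_lt.le.trans hle) hΓ
    exact ⟨p, e, w, hpz, hp, hpe, hez, he_lt, hew, hw⟩
  choose p e w hpz hp hpe hez he hew hw using hbranch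
  have hinj : Function.Injective
      fun ξ => (⟨w ξ, hw ξ⟩ : {t : T | nodeHeight hT t = tower next o}) := by
    refine Function.Injective.of_lt_imp_ne fun ξ η hξη heq =>
      hez ξ ((?_ : e ξ ≤ p η).trans (hpz η))
    refine hT.le_of_le_of_nodeHeight_le ((hew ξ).trans_eq (congrArg Subtype.val heq))
      ((hpe η).trans (hew η)) ?_
    exact (he ξ).le.trans ((hp η).symm ▸ map_tower_le_tower next hξη)
  have := Cardinal.lift_mk_le_lift_mk_of_injective hinj
  rw [Cardinal.mk_Iio_ordinal] at this
  simpa only [Cardinal.lift_lift, Cardinal.lift_le] using this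

end IsSetTree

theorem stmt13_general (κ lam : Cardinal.{u}) (hκ : κ.IsRegular)
    (hlt : lam < κ)
    (T : Type u) [PartialOrder T] (hT : IsSetTree T)
    (hht : ∀ t : T, nodeHeight hT t < κ.ord)
    (hlev : ∀ o : Ordinal.{u}, o < κ.ord → ∃ t : T, nodeHeight hT t = o)
    (hwidth : ∀ o : Ordinal.{u}, #{t : T | nodeHeight hT t = o} < lam) :
    HasChainOfSize T κ := by
  by_contra hnc
  have hwidthκ : ∀ o, #{t : T | nodeHeight hT t = o} < κ := fun o => (hwidth o).trans hlt
  obtain ⟨next, hnext, hnext_lt, hsplit⟩ := IsSetTree.exists_splitsBelow_bound hκ hht hwidthκ hnc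
  have hΓ : Ordinal.tower next lam.ord < κ.ord :=
    Ordinal.tower_lt_ord hκ hnext_lt (by rwa [Cardinal.card_ord])
  obtain ⟨z, hzΓ, hz⟩ := IsSetTree.exists_isTall_nodeHeight_eq hκ hlev hwidthκ hΓ
  have hlam_le := IsSetTree.card_le_mk_level_tower hnext hsplit hΓ hz hzΓ
  rw [Cardinal.card_ord] at hlam_le
  exact (hwidth _).not_ge hlam_le

/-- Kurepa: if λ < κ are regular, every tree of height κ all of whose
levels have size < λ has a chain of size κ. -/
theorem stmt13 (κ lam : Cardinal.{u}) (hκ : κ.IsRegular) (hlam : lam.IsRegular)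
    (hlt : lam < κ)
    (T : Type u) [PartialOrder T] (hT : IsSetTree T)
    (hht : ∀ t : T, nodeHeight hT t < κ.ord)
    (hlev : ∀ o : Ordinal.{u}, o < κ.ord → ∃ t : T, nodeHeight hT t = o)
    (hwidth : ∀ o : Ordinal.{u}, #{t : T | nodeHeight hT t = o} < lam) :
    HasChainOfSize T κ :=
  stmt13_general κ lam hκ hlt T hT hht hlev hwidth
end

section
/- Let G be a graph whose vertex set is partitioned into non-empty connected pieces (V_t)_{t ∈ T} indexed by a tree T, such that whenever there is an edge of G between V_s and V_t with s ≠ t, the nodes s and t are comparable in T, and such that all pieces V_t have size less than κ for a regular cardinal κ. If K_κ is a minor of G, then T has a chain of size at least κ. -/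
universe u

open Cardinal

section Aux

variable {T : Type u} [PartialOrder T]

/-- In a set tree, every nonempty set has a minimal element. -/
lemma IsSetTree.exists_minimal (hT : IsSetTree T) {S : Set T} (hS : S.Nonempty) :
    ∃ m ∈ S, ∀ s ∈ S, ¬ s < m := by
  obtain ⟨t0, ht0⟩ := hS
  by_cases h : ∃ s ∈ S, s < t0
  · obtain ⟨s0, hs0S, hs0⟩ := h
    haveI := hT t0
    have hwf : WellFounded ((· < ·) : {s : T // s < t0} → {s : T // s < t0} → Prop) :=
      IsWellFounded.wf
    obtain ⟨m, hmS', hmin⟩ := hwf.has_min {s | s.1 ∈ S} ⟨⟨s0, hs0⟩, hs0S⟩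
    refine ⟨m.1, hmS', ?_⟩
    intro s hsS hlt
    exact hmin ⟨s, lt_trans hlt m.2⟩ hsS (Subtype.mk_lt_mk.mpr hlt)
  · exact ⟨t0, ht0, fun s hs hlt => h ⟨s, hs, hlt⟩⟩

/-- In a set tree, elements below a common element are comparable. -/
lemma IsSetTree.comp_of_le (hT : IsSetTree T) {a b c : T} (ha : a ≤ c) (hb : b ≤ c) :
    a ≤ b ∨ b ≤ a := by
  rcases ha.lt_or_eq with ha' | rfl
  · rcases hb.lt_or_eq with hb' | rfl
    · haveI := hT c
      rcases @trichotomous _ ((· < ·) : {s : T // s < c} → {s : T // s < c} → Prop) _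
          ⟨a, ha'⟩ ⟨b, hb'⟩ with h | h | h
      · exact Or.inl (Subtype.mk_lt_mk.mp h).le
      · exact Or.inl (le_of_eq (congrArg Subtype.val h))
      · exact Or.inr (Subtype.mk_lt_mk.mp h).le
    · exact Or.inl ha'.le
  · exact Or.inr hb

end Aux

/-- if G is partitioned into nonempty connected pieces of size < κ
indexed by a tree, with edges only between pieces with comparable indices, and K_κ
is a minor of G (κ regular), then T has a chain of size at least κ. -/
theorem stmt16 (κ : Cardinal.{u}) (hreg : κ.IsRegular)
    {V : Type u} (G : SimpleGraph V)
    (T : Type u) [PartialOrder T] (hT : IsSetTree T)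
    (P : T → Set V)
    (hpart : ∀ v : V, ∃! t, v ∈ P t)
    (hne : ∀ t, (P t).Nonempty)
    (hconn : ∀ t, (G.induce (P t)).Connected)
    (hedge : ∀ ⦃x y : V⦄, G.Adj x y → ∀ ⦃s t : T⦄, x ∈ P s → y ∈ P t → s ≠ t →
      s < t ∨ t < s)
    (hsmall : ∀ t, #(P t) < κ)
    (hminor : HasCompleteMinor G κ) :
    ∃ C : Set T, IsChain (· ≤ ·) C ∧ κ ≤ #C := by
  classical
  obtain ⟨ι, U, hι, hUne, hUdisj, hUconn, hUadj⟩ := hminor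
  -- the piece of each vertex
  set p : V → T := fun v => (hpart v).choose with hp_def
  have hp : ∀ v, v ∈ P (p v) := fun v => (hpart v).choose_spec.1
  have hp_uniq : ∀ {v t}, v ∈ P t → t = p v := fun {v t} h =>
    (hpart v).choose_spec.2 t h
  -- for each branch set, a minimal piece met by it
  have hSne : ∀ i, (p '' U i).Nonempty := fun i => (hUne i).image p
  choose t ht_mem ht_min using fun i => hT.exists_minimal (hSne i)
  -- the witness vertex of minimality
  choose x hx_mem hx_eq using fun i => ht_mem i
  -- key: t i is below the piece of every vertex of U i
  have hkey : ∀ i, ∀ v ∈ U i, t i ≤ p v := by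
    intro i v hv
    obtain ⟨w⟩ := (hUconn i) ⟨x i, hx_mem i⟩ ⟨v, hv⟩
    have : ∀ (a b : U i) (w : (G.induce (U i)).Walk a b), t i ≤ p a.1 → t i ≤ p b.1 := by
      intro a b w
      induction w with
      | nil => exact id
      | cons h w ih =>
        rename_i a' c' b'
        intro ha
        apply ih
        have hadj : G.Adj a'.1 c'.1 := h
        by_cases hpc : p a'.1 = p c'.1
        · exact hpc ▸ ha
        · rcases hedge hadj (hp a'.1) (hp c'.1) hpc with hlt | hlt
          · exact ha.trans hlt.le
          · -- p c' < p a'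
            rcases ha.lt_or_eq with ha' | ha'
            · haveI := hT (p a'.1)
              rcases @trichotomous _
                  ((· < ·) : {s : T // s < p a'.1} → {s : T // s < p a'.1} → Prop) _
                  ⟨t i, ha'⟩ ⟨p c'.1, hlt⟩ with h' | h' | h'
              · exact (Subtype.mk_lt_mk.mp h').le
              · exact le_of_eq (congrArg Subtype.val h')
              · exact absurd (Subtype.mk_lt_mk.mp h')
                  (ht_min i _ ⟨c'.1, c'.2, rfl⟩)
            · exact absurd (ha' ▸ hlt) (ht_min i _ ⟨c'.1, c'.2, rfl⟩)
    exact this _ _ w (le_of_eq (hx_eq i).symm)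
  -- the t i are pairwise comparable
  have hcomp : ∀ i j, i ≠ j → t i ≤ t j ∨ t j ≤ t i := by
    intro i j hij
    obtain ⟨a, ha, b, hb, hab⟩ := hUadj i j hij
    have hti : t i ≤ p a := hkey i a ha
    have htj : t j ≤ p b := hkey j b hb
    by_cases hpab : p a = p b
    · exact hT.comp_of_le hti (hpab ▸ htj)
    · rcases hedge hab (hp a) (hp b) hpab with hlt | hlt
      · exact hT.comp_of_le (hti.trans hlt.le) htj
      · exact hT.comp_of_le hti (htj.trans hlt.le)
  refine ⟨Set.range t, ?_, ?_⟩
  · rintro _ ⟨i, rfl⟩ _ ⟨j, rfl⟩ hne'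
    exact hcomp i j (by rintro rfl; exact hne' rfl)
  · -- cardinality: fibers of t have size < κ
    by_contra hle
    push_neg at hle
    have hfib : ∀ b : Set.range t, #{i // t i = b.1} < κ := by
      rintro ⟨s, hs⟩
      have hinj : Function.Injective
          (fun i : {i // t i = s} => (⟨x i.1, by
            have := hp (x i.1)
            rw [hx_eq i.1, i.2] at this
            exact this⟩ : P s)) := by
        rintro ⟨i, hi⟩ ⟨j, hj⟩ h
        have hxx : x i = x j := congrArg Subtype.val h
        by_contra hne'
        have hij : i ≠ j := fun h' => hne' (Subtype.ext h')
        exact (hUdisj i j hij).ne_of_mem (hx_mem i) (hx_mem j) hxx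
      exact lt_of_le_of_lt (Cardinal.mk_le_of_injective hinj) (hsmall s)
    have hg : #ι = Cardinal.sum fun b : Set.range t => #{i // t i = b.1} := by
      have e : (Σ b : Set.range t, {i // (fun i => (⟨t i, ⟨i, rfl⟩⟩ : Set.range t)) i = b}) ≃ ι :=
        Equiv.sigmaFiberEquiv _
      rw [← Cardinal.mk_congr e, Cardinal.mk_sigma]
      congr 1
      funext b
      apply Cardinal.mk_congr
      exact Equiv.subtypeEquivRight fun i => by
        constructor
        · intro h; exact congrArg Subtype.val h
        · intro h; exact Subtype.ext h
    have : #ι < κ := by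
      rw [hg]
      exact Cardinal.sum_lt_of_isRegular hreg hle hfib
    exact absurd hι this.ne
end
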